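/- arXiv:2309.01702 — 5 statements merged into one kernel-verified Lean document; each statement's English description precedes it below -/
import Mathlib

section
/- Let 0 ≤ a ≤ b be real numbers and α ≥ 0. Then Γ(a+α+1)/(Γ(a+1)Γ(α+1)) ≤ Γ(b+α+1)/(Γ(b+1)Γ(α+1)), i.e. the generalized binomial coefficient binom(a+α, a) is nondecreasing as a function of a ∈ [0,∞). -/
/-- For real `0 ≤ a ≤ b` and `α ≥ 0`, the generalized binomial coefficient
`binom(x+α, x) = Γ(x+α+1)/(Γ(x+1)Γ(α+1))` is nondecreasing in `x`:
`Γ(a+α+1)/(Γ(a+1)Γ(α+1)) ≤ Γ(b+α+1)/(Γ(b+1)Γ(α+1))`. -/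
theorem genBinom_mono (a b α : ℝ) (ha : 0 ≤ a) (hab : a ≤ b) (hα : 0 ≤ α) :
    Real.Gamma (a + α + 1) / (Real.Gamma (a + 1) * Real.Gamma (α + 1)) ≤
      Real.Gamma (b + α + 1) / (Real.Gamma (b + 1) * Real.Gamma (α + 1)) := by
  have hb : 0 ≤ b := ha.trans hab
  have hGa : 0 < Real.Gamma (a + 1) := Real.Gamma_pos_of_pos (by linarith)
  have hGb : 0 < Real.Gamma (b + 1) := Real.Gamma_pos_of_pos (by linarith)
  have hGaα : 0 < Real.Gamma (a + α + 1) := Real.Gamma_pos_of_pos (by linarith)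
  have hGbα : 0 < Real.Gamma (b + α + 1) := Real.Gamma_pos_of_pos (by linarith)
  have hGα : 0 < Real.Gamma (α + 1) := Real.Gamma_pos_of_pos (by linarith)
  rw [div_le_div_iff₀ (by positivity) (by positivity)]
  rw [show Real.Gamma (a + α + 1) * (Real.Gamma (b + 1) * Real.Gamma (α + 1))
      = (Real.Gamma (a + α + 1) * Real.Gamma (b + 1)) * Real.Gamma (α + 1) by ring,
    show Real.Gamma (b + α + 1) * (Real.Gamma (a + 1) * Real.Gamma (α + 1))
      = (Real.Gamma (b + α + 1) * Real.Gamma (a + 1)) * Real.Gamma (α + 1) by ring]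
  gcongr ?_ * _
  -- key: Γ(a+α+1) * Γ(b+1) ≤ Γ(b+α+1) * Γ(a+1)
  rcases eq_or_lt_of_le hα with hα0 | hα0
  · rw [← hα0]; simp [mul_comm]
  rcases eq_or_lt_of_le hab with hab0 | hab0
  · rw [hab0]
  have hconv := Real.convexOn_log_Gamma
  set f : ℝ → ℝ := Real.log ∘ Real.Gamma with hf
  have h1 : (f (a + 1 + α) - f (a + 1)) / (a + 1 + α - (a + 1))
      ≤ (f (b + 1 + α) - f (a + 1)) / (b + 1 + α - (a + 1)) :=
    hconv.secant_mono (by simp [Set.mem_Ioi]; linarith)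
      (by simp [Set.mem_Ioi]; linarith) (by simp [Set.mem_Ioi]; linarith)
      (by linarith) (by linarith) (by linarith)
  have h2 : (f (a + 1) - f (b + 1 + α)) / (a + 1 - (b + 1 + α))
      ≤ (f (b + 1) - f (b + 1 + α)) / (b + 1 - (b + 1 + α)) :=
    hconv.secant_mono (a := b + 1 + α) (x := a + 1) (y := b + 1)
      (by simp [Set.mem_Ioi]; linarith) (by simp [Set.mem_Ioi]; linarith)
      (by simp [Set.mem_Ioi]; linarith) (by linarith) (by linarith) (by linarith)
  -- convert h2 divisions (negative denominators)
  have h2' : (f (b + 1 + α) - f (a + 1)) / (b + 1 + α - (a + 1))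
      ≤ (f (b + 1 + α) - f (b + 1)) / α := by
    have e1 : (f (a + 1) - f (b + 1 + α)) / (a + 1 - (b + 1 + α))
        = (f (b + 1 + α) - f (a + 1)) / (b + 1 + α - (a + 1)) := by
      rw [← neg_div_neg_eq]; ring_nf
    have e2 : (f (b + 1) - f (b + 1 + α)) / (b + 1 - (b + 1 + α))
        = (f (b + 1 + α) - f (b + 1)) / α := by
      rw [← neg_div_neg_eq]; ring_nf
    rw [e1, e2] at h2
    exact h2
  have key : f (a + 1 + α) - f (a + 1) ≤ f (b + 1 + α) - f (b + 1) := by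
    have hd1 : (0:ℝ) < a + 1 + α - (a + 1) := by linarith
    have hd2 : (0:ℝ) < b + 1 + α - (a + 1) := by linarith
    have c1 : (f (a + 1 + α) - f (a + 1)) / α ≤ (f (b + 1 + α) - f (a + 1)) / (b + 1 + α - (a + 1)) := by
      have : a + 1 + α - (a + 1) = α := by ring
      rwa [this] at h1
    have c2 := le_trans c1 h2'
    rw [div_le_div_iff₀ hα0 hα0] at c2
    nlinarith
  have key' : Real.log (Real.Gamma (a + α + 1)) + Real.log (Real.Gamma (b + 1))
      ≤ Real.log (Real.Gamma (b + α + 1)) + Real.log (Real.Gamma (a + 1)) := by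
    have e1 : a + 1 + α = a + α + 1 := by ring
    have e2 : b + 1 + α = b + α + 1 := by ring
    simp only [hf, Function.comp] at key
    rw [e1, e2] at key
    linarith
  rw [← Real.log_mul hGaα.ne' hGb.ne', ← Real.log_mul hGbα.ne' hGa.ne'] at key'
  exact (Real.log_le_log_iff (by positivity) (by positivity)).mp key'
end

section
/- Let f and g be analytic functions on the polydisc D_{ρ₁,...,ρ_N} ⊂ ℂ^N, let s ∈ [1,∞)^N, let α, β ∈ [1,∞)^N ∪ {0}, and let 0 < r < min(ρ₁,...,ρ_N). Then ‖f·g‖_{α+β,r,s} ≤ ‖f‖_{α,r,s} · ‖g‖_{β,r,s}. -/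
/-- Generalized binomial coefficient `binom(α+j−1, j) = (∏_{i=0}^{j−1}(α+i))/j!`. -/
noncomputable def genBinom (α : ℝ) (j : ℕ) : ℝ :=
  (∏ i ∈ Finset.range j, (α + i)) / (j.factorial : ℝ)

/-- Taylor coefficients of an analytic function on the polydisc `D_{ρ₁,...,ρ_N}`. -/
def AnalyticCoeffs {N : ℕ} (ρ : Fin N → ℝ) (f : (Fin N → ℕ) → ℂ) : Prop :=
  ∀ r : Fin N → ℝ, (∀ d, 0 ≤ r d) → (∀ d, r d < ρ d) →
    Summable fun J : Fin N → ℕ => ‖f J‖ * ∏ d, r d ^ J d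

/-- The majorization set defining the modified Nagumo norm for `α ≠ 0`. -/
def nagumoSet {N : ℕ} (f : (Fin N → ℕ) → ℂ) (α : Fin N → ℝ) (r : ℝ) (s : Fin N → ℝ) :
    Set ℝ :=
  {A : ℝ | 0 ≤ A ∧ ∀ J : Fin N → ℕ,
    ‖f J‖ ≤ A * ∏ d, r ^ (-(α d)) * genBinom (α d) (J d) ^ s d * (r ^ J d)⁻¹}

open Classical in
/-- The modified Nagumo norm `‖f‖_{α,r,s}`. -/
noncomputable def nagumoNorm {N : ℕ} (f : (Fin N → ℕ) → ℂ) (α : Fin N → ℝ) (r : ℝ)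
    (s : Fin N → ℝ) : ℝ :=
  if α = 0 then ∑' J : Fin N → ℕ, ‖f J‖ * r ^ (∑ d, J d)
  else sInf (nagumoSet f α r s)

/-- Cauchy product of Taylor coefficient families: the coefficients of `f·g`. -/
noncomputable def coeffMul {N : ℕ} (f g : (Fin N → ℕ) → ℂ) : (Fin N → ℕ) → ℂ :=
  fun J => ∑ K ∈ Finset.Iic J, f K * g (J - K)


/-!
Coefficientwise, `f·g` is a Cauchy product, so its majorant is the Cauchy product of the
majorants of `f` and `g`. When `α, β ≠ 0` the majorants are products of one-variable weights
`r^{-α} binom(α+j−1,j)^s r^{-j}`, and in each variable the Chu–Vandermonde identity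
`Σ_k binom(α+k−1,k) binom(β+j−k−1,j−k) = binom(α+β+j−1,j)`, combined with superadditivity of
`x ↦ x^s` for `s ≥ 1`, bounds their convolution by the `(α+β)`-weight. When one index is `0`,
monotonicity of `j ↦ binom(β+j−1,j)` for `β ≥ 1` lets the weighted `ℓ¹` norm of the other
factor be pulled out; when both are `0`, the norm is a weighted `ℓ¹` norm, which is
submultiplicative.
-/

open Finset

theorem Ring.multichoose_add {R : Type*} [CommRing R] [BinomialRing R] (r s : R) (k : ℕ) :
    multichoose (r + s) k = ∑ ij ∈ antidiagonal k, multichoose r ij.1 * multichoose s ij.2 := by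
  -- Chu–Vandermonde at `-r, -s`, since `choose (-r) n = (-1)^n • multichoose r n`.
  have h := add_choose_eq k (Commute.all (-r) (-s))
  rw [← neg_add, choose_neg'] at h
  simp only [choose_neg', smul_mul_smul_comm, ← Int.negOnePow_add] at h
  rw [sum_congr rfl fun ij hij => by rw [← Nat.cast_add, mem_antidiagonal.1 hij],
    ← smul_sum] at h
  exact (smul_left_cancel_iff _).1 h

theorem Polynomial.ascPochhammer_eval_eq_prod_range {R : Type*} [CommSemiring R] (n : ℕ)
    (r : R) : (ascPochhammer R n).eval r = ∏ i ∈ range n, (r + i) := by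
  induction n with
  | zero => simp
  | succ n ih => simp [ascPochhammer_succ_right, ih, prod_range_succ]

theorem Real.sum_rpow_le_rpow_sum {ι : Type*} (t : Finset ι) {a : ι → ℝ}
    (ha : ∀ i ∈ t, 0 ≤ a i) {p : ℝ} (hp : 1 ≤ p) : ∑ i ∈ t, a i ^ p ≤ (∑ i ∈ t, a i) ^ p := by
  classical
  induction t using Finset.induction_on with
  | empty => simp [zero_rpow (by linarith : p ≠ 0)]
  | insert i t hi ih =>
    rw [sum_insert hi, sum_insert hi]
    have hai := ha i (mem_insert_self i t)
    have hsum := sum_nonneg fun j hj => ha j (mem_insert_of_mem hj)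
    calc a i ^ p + ∑ j ∈ t, a j ^ p
        ≤ a i ^ p + (∑ j ∈ t, a j) ^ p := by
          gcongr
          exact ih fun j hj => ha j (mem_insert_of_mem hj)
      _ ≤ (a i + ∑ j ∈ t, a j) ^ p := by
          exact_mod_cast NNReal.add_rpow_le_rpow_add ⟨a i, hai⟩ ⟨_, hsum⟩ hp

section genBinom

variable {α β : ℝ}

theorem genBinom_eq_multichoose (α : ℝ) (j : ℕ) : genBinom α j = Ring.multichoose α j := by
  have h := Ring.factorial_nsmul_multichoose_eq_ascPochhammer α j
  rw [Polynomial.ascPochhammer_smeval_cast, Polynomial.ascPochhammer_smeval_eq_eval,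
    Polynomial.ascPochhammer_eval_eq_prod_range, nsmul_eq_mul] at h
  rw [genBinom, ← h, mul_div_cancel_left₀ _ (by positivity)]

theorem sum_Iic_genBinom_mul (α β : ℝ) (j : ℕ) :
    ∑ k ∈ Iic j, genBinom α k * genBinom β (j - k) = genBinom (α + β) j := by
  simp only [genBinom_eq_multichoose, Ring.multichoose_add,
    Nat.sum_antidiagonal_eq_sum_range_succ fun i k => Ring.multichoose α i * Ring.multichoose β k,
    Nat.range_succ_eq_Iic]

theorem genBinom_zero (α : ℝ) : genBinom α 0 = 1 := by simp [genBinom]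

theorem genBinom_succ (α : ℝ) (j : ℕ) :
    genBinom α (j + 1) = genBinom α j * ((α + j) / (j + 1)) := by
  simp only [genBinom, prod_range_succ, Nat.factorial_succ, Nat.cast_mul, Nat.cast_succ]
  field_simp

theorem genBinom_nonneg (hα : 0 ≤ α) (j : ℕ) : 0 ≤ genBinom α j :=
  div_nonneg (prod_nonneg fun i _ => by positivity) (Nat.cast_nonneg _)

theorem genBinom_pos (hα : 0 < α) (j : ℕ) : 0 < genBinom α j :=
  div_pos (prod_pos fun i _ => by positivity) (by positivity)

theorem genBinom_mono_s6 (hα : 1 ≤ α) : Monotone (genBinom α) := by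
  refine monotone_nat_of_le_succ fun j => ?_
  rw [genBinom_succ]
  refine le_mul_of_one_le_right (genBinom_nonneg (by linarith) j) ?_
  rw [one_le_div (by positivity)]
  linarith

theorem one_le_genBinom (hα : 1 ≤ α) (j : ℕ) : 1 ≤ genBinom α j :=
  genBinom_zero α ▸ genBinom_mono_s6 hα (Nat.zero_le j)

end genBinom

/-- The `j`-th Taylor coefficient of `r^{-α} Θ_{α,s}(x/r)`; `nagumoSet` majorizes by products of
these, one factor per variable. -/
noncomputable def nagumoWeight (α r s : ℝ) (j : ℕ) : ℝ :=
  r ^ (-α) * genBinom α j ^ s * (r ^ j)⁻¹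

section nagumoWeight

variable {α β r s : ℝ}

theorem nagumoWeight_nonneg (hα : 0 ≤ α) (hr : 0 < r) (j : ℕ) : 0 ≤ nagumoWeight α r s j := by
  have := Real.rpow_nonneg (genBinom_nonneg hα j) s
  unfold nagumoWeight
  positivity

theorem nagumoWeight_pos (hα : 0 < α) (hr : 0 < r) (j : ℕ) : 0 < nagumoWeight α r s j := by
  have := Real.rpow_pos_of_pos (genBinom_pos hα j) s
  unfold nagumoWeight
  positivity

theorem inv_pow_le_rpow_mul_nagumoWeight (hα : 1 ≤ α) (hs : 0 ≤ s) (hr : 0 < r) (j : ℕ) :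
    (r ^ j)⁻¹ ≤ r ^ α * nagumoWeight α r s j := by
  have hbinom : 1 ≤ genBinom α j ^ s := Real.one_le_rpow (one_le_genBinom hα j) hs
  calc (r ^ j)⁻¹ ≤ genBinom α j ^ s * (r ^ j)⁻¹ := le_mul_of_one_le_left (by positivity) hbinom
    _ = r ^ α * nagumoWeight α r s j := by
      rw [nagumoWeight, ← mul_assoc, ← mul_assoc, ← Real.rpow_add hr, add_neg_cancel,
        Real.rpow_zero, one_mul]

theorem nagumoWeight_sub_le (hα : 1 ≤ α) (hs : 0 ≤ s) (hr : 0 < r) {j k : ℕ} (hkj : k ≤ j) :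
    nagumoWeight α r s (j - k) ≤ nagumoWeight α r s j * r ^ k := by
  have hbinom : genBinom α (j - k) ^ s ≤ genBinom α j ^ s :=
    Real.rpow_le_rpow (genBinom_nonneg (by linarith) _) (genBinom_mono_s6 hα (Nat.sub_le j k)) hs
  have hpow : (r ^ (j - k))⁻¹ = (r ^ j)⁻¹ * r ^ k := by
    rw [← pow_sub_mul_pow r hkj, mul_inv, mul_assoc, inv_mul_cancel₀ (by positivity), mul_one]
  have := Real.rpow_pos_of_pos hr (-α)
  rw [nagumoWeight, nagumoWeight, hpow]
  calc r ^ (-α) * genBinom α (j - k) ^ s * ((r ^ j)⁻¹ * r ^ k)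
      ≤ r ^ (-α) * genBinom α j ^ s * ((r ^ j)⁻¹ * r ^ k) := by gcongr
    _ = r ^ (-α) * genBinom α j ^ s * (r ^ j)⁻¹ * r ^ k := by ring

theorem sum_Iic_nagumoWeight_mul_le (hα : 0 ≤ α) (hβ : 0 ≤ β) (hs : 1 ≤ s) (hr : 0 < r)
    (j : ℕ) :
    ∑ k ∈ Iic j, nagumoWeight α r s k * nagumoWeight β r s (j - k)
      ≤ nagumoWeight (α + β) r s j := by
  set c := r ^ (-(α + β)) * (r ^ j)⁻¹
  have hc : 0 ≤ c := by have := Real.rpow_pos_of_pos hr (-(α + β)); positivity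
  have hterm : ∀ k ∈ Iic j, nagumoWeight α r s k * nagumoWeight β r s (j - k)
      = c * (genBinom α k * genBinom β (j - k)) ^ s := by
    intro k hk
    simp only [Real.mul_rpow (genBinom_nonneg hα k) (genBinom_nonneg hβ _), c, nagumoWeight,
      neg_add, Real.rpow_add hr]
    rw [← pow_sub_mul_pow r (mem_Iic.1 hk), mul_inv]
    ring
  calc ∑ k ∈ Iic j, nagumoWeight α r s k * nagumoWeight β r s (j - k)
      = c * ∑ k ∈ Iic j, (genBinom α k * genBinom β (j - k)) ^ s := by
        rw [sum_congr rfl hterm, mul_sum]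
    _ ≤ c * genBinom (α + β) j ^ s := by
        rw [← sum_Iic_genBinom_mul]
        exact mul_le_mul_of_nonneg_left (Real.sum_rpow_le_rpow_sum _
          (fun k _ => mul_nonneg (genBinom_nonneg hα k) (genBinom_nonneg hβ _)) hs) hc
    _ = nagumoWeight (α + β) r s j := by simp only [c, nagumoWeight]; ring

end nagumoWeight

section MultiIndex

variable {N : ℕ}

theorem sum_Iic_prod_eq_prod_sum {M : Type*} [CommSemiring M] (J : Fin N → ℕ)
    (F : Fin N → ℕ → M) :
    ∑ K ∈ Iic J, ∏ d, F d (K d) = ∏ d, ∑ k ∈ Iic (J d), F d k := by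
  have hIic : Iic J = Fintype.piFinset fun d => Iic (J d) := by
    ext K
    simp [Fintype.mem_piFinset, Pi.le_def]
  rw [hIic, prod_univ_sum]

theorem pow_sum_eq_pow_sum_mul_pow_sum_sub {M : Type*} [Monoid M] (x : M)
    {J K : Fin N → ℕ} (hKJ : K ≤ J) :
    x ^ (∑ d, J d) = x ^ (∑ d, K d) * x ^ (∑ d, (J - K) d) := by
  rw [← pow_add, ← sum_add_distrib]
  congr 2 with d
  exact (Nat.add_sub_cancel' (hKJ d)).symm

theorem sum_sum_Iic_le_tsum_mul_tsum {a b : (Fin N → ℕ) → ℝ} (ha : 0 ≤ a) (hb : 0 ≤ b)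
    (hsa : Summable a) (hsb : Summable b) (S : Finset (Fin N → ℕ)) :
    ∑ J ∈ S, ∑ K ∈ Iic J, a K * b (J - K) ≤ (∑' K, a K) * ∑' L, b L := by
  classical
  let split : (Σ _ : Fin N → ℕ, Fin N → ℕ) → (Fin N → ℕ) × (Fin N → ℕ) := fun x =>
    (x.2, x.1 - x.2)
  have hsplit : Set.InjOn split (S.sigma Iic) := by
    rintro ⟨J, K⟩ hJK ⟨J', K'⟩ hJK' h
    obtain ⟨rfl, hsub⟩ := Prod.mk.inj h
    simp only [coe_sigma, Set.mem_sigma_iff, mem_coe, mem_Iic] at hJK hJK' hsub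
    rw [← tsub_add_cancel_of_le hJK.2, ← tsub_add_cancel_of_le hJK'.2, hsub]
  calc ∑ J ∈ S, ∑ K ∈ Iic J, a K * b (J - K)
      = ∑ p ∈ (S.sigma Iic).image split, a p.1 * b p.2 := by
        rw [sum_sigma', sum_image hsplit]
    _ ≤ ∑' p : (Fin N → ℕ) × (Fin N → ℕ), a p.1 * b p.2 :=
        (hsa.mul_of_nonneg hsb ha hb).sum_le_tsum _ fun p _ => mul_nonneg (ha _) (hb _)
    _ = (∑' K, a K) * ∑' L, b L :=
        (hsa.tsum_mul_tsum hsb (hsa.mul_of_nonneg hsb ha hb)).symm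

theorem norm_coeffMul_le (f g : (Fin N → ℕ) → ℂ) (J : Fin N → ℕ) :
    ‖coeffMul f g J‖ ≤ ∑ K ∈ Iic J, ‖f K‖ * ‖g (J - K)‖ :=
  (norm_sum_le _ _).trans_eq (sum_congr rfl fun _ _ => norm_mul _ _)

theorem coeffMul_comm (f g : (Fin N → ℕ) → ℂ) : coeffMul f g = coeffMul g f := by
  ext J
  refine sum_nbij' (J - ·) (J - ·) ?_ ?_ ?_ ?_ ?_ <;>
    simp only [mem_Iic]
  · exact fun K _ => tsub_le_self
  · exact fun K _ => tsub_le_self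
  · exact fun K hK => tsub_tsub_cancel_of_le hK
  · exact fun K hK => tsub_tsub_cancel_of_le hK
  · exact fun K hK => by rw [tsub_tsub_cancel_of_le hK, mul_comm]

theorem AnalyticCoeffs.summable_norm_mul_pow {ρ : Fin N → ℝ} {f : (Fin N → ℕ) → ℂ}
    (hf : AnalyticCoeffs ρ f) {r : ℝ} (hr : 0 ≤ r) (hrρ : ∀ d, r < ρ d) :
    Summable fun J : Fin N → ℕ => ‖f J‖ * r ^ (∑ d, J d) := by
  simpa only [prod_pow_eq_pow_sum] using hf (fun _ => r) (fun _ => hr) hrρ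

end MultiIndex

section NagumoNorm

variable {N : ℕ} {f g : (Fin N → ℕ) → ℂ} {α β s : Fin N → ℝ} {r A B : ℝ}

theorem nagumoNorm_zero (f : (Fin N → ℕ) → ℂ) (r : ℝ) (s : Fin N → ℝ) :
    nagumoNorm f 0 r s = ∑' J, ‖f J‖ * r ^ (∑ d, J d) :=
  if_pos rfl

theorem nagumoNorm_le_of_mem (hα : α ≠ 0) (hA : A ∈ nagumoSet f α r s) :
    nagumoNorm f α r s ≤ A := by
  rw [nagumoNorm, if_neg hα]
  exact csInf_le ⟨0, fun _ hA' => hA'.1⟩ hA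

theorem nagumoSet_nonempty (hα : ∀ d, 1 ≤ α d) (hs : ∀ d, 0 ≤ s d) (hr : 0 < r)
    (hf : Summable fun J : Fin N → ℕ => ‖f J‖ * r ^ (∑ d, J d)) :
    (nagumoSet f α r s).Nonempty := by
  set T := ∑' J, ‖f J‖ * r ^ (∑ d, J d)
  have hT : 0 ≤ T := tsum_nonneg fun J => by positivity
  refine ⟨T * ∏ d, r ^ α d, by positivity, fun J => ?_⟩
  calc ‖f J‖ = ‖f J‖ * r ^ (∑ d, J d) * ∏ d, (r ^ J d)⁻¹ := by
        rw [prod_inv_distrib, prod_pow_eq_pow_sum, mul_inv_cancel_right₀ (by positivity)]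
    _ ≤ T * ∏ d, r ^ α d * nagumoWeight (α d) r (s d) (J d) := by
        gcongr with d
        · exact hf.le_tsum J fun _ _ => by positivity
        · exact inv_pow_le_rpow_mul_nagumoWeight (hα d) (hs d) hr (J d)
    _ = (T * ∏ d, r ^ α d) * ∏ d, nagumoWeight (α d) r (s d) (J d) := by
        rw [prod_mul_distrib, mul_assoc]

theorem csInf_mem_nagumoSet (hα : ∀ d, 0 < α d) (hr : 0 < r)
    (hne : (nagumoSet f α r s).Nonempty) :
    sInf (nagumoSet f α r s) ∈ nagumoSet f α r s := by
  refine ⟨le_csInf hne fun _ hA => hA.1, fun J => ?_⟩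
  have hW : 0 < ∏ d, nagumoWeight (α d) r (s d) (J d) :=
    prod_pos fun d _ => nagumoWeight_pos (hα d) hr (J d)
  show ‖f J‖ ≤ _ * ∏ d, nagumoWeight (α d) r (s d) (J d)
  rw [← div_le_iff₀ hW]
  exact le_csInf hne fun _ hA => (div_le_iff₀ hW).2 (hA.2 J)

theorem nagumoNorm_mem_nagumoSet (hα0 : α ≠ 0) (hα : ∀ d, 1 ≤ α d) (hs : ∀ d, 0 ≤ s d)
    (hr : 0 < r) (hf : Summable fun J : Fin N → ℕ => ‖f J‖ * r ^ (∑ d, J d)) :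
    nagumoNorm f α r s ∈ nagumoSet f α r s := by
  rw [nagumoNorm, if_neg hα0]
  exact csInf_mem_nagumoSet (fun d => one_pos.trans_le (hα d)) hr
    (nagumoSet_nonempty hα hs hr hf)

theorem tsum_norm_coeffMul_mul_pow_le (hr : 0 ≤ r)
    (hf : Summable fun J : Fin N → ℕ => ‖f J‖ * r ^ (∑ d, J d))
    (hg : Summable fun J : Fin N → ℕ => ‖g J‖ * r ^ (∑ d, J d)) :
    ∑' J, ‖coeffMul f g J‖ * r ^ (∑ d, J d)
      ≤ (∑' J, ‖f J‖ * r ^ (∑ d, J d)) * ∑' J, ‖g J‖ * r ^ (∑ d, J d) := by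
  refine tsum_le_of_sum_le' (by positivity) fun S => ?_
  refine le_trans (sum_le_sum fun J _ => ?_) (sum_sum_Iic_le_tsum_mul_tsum
    (fun J => by positivity) (fun J => by positivity) hf hg S)
  calc ‖coeffMul f g J‖ * r ^ (∑ d, J d)
      ≤ (∑ K ∈ Iic J, ‖f K‖ * ‖g (J - K)‖) * r ^ (∑ d, J d) := by
        gcongr
        exact norm_coeffMul_le f g J
    _ = ∑ K ∈ Iic J, ‖f K‖ * r ^ (∑ d, K d) * (‖g (J - K)‖ * r ^ (∑ d, (J - K) d)) := by
        rw [sum_mul]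
        refine sum_congr rfl fun K hK => ?_
        rw [pow_sum_eq_pow_sum_mul_pow_sum_sub r (mem_Iic.1 hK)]
        ring

theorem mul_mem_nagumoSet_coeffMul (hA : A ∈ nagumoSet f α r s) (hB : B ∈ nagumoSet g β r s)
    (hα : ∀ d, 0 ≤ α d) (hβ : ∀ d, 0 ≤ β d) (hs : ∀ d, 1 ≤ s d) (hr : 0 < r) :
    A * B ∈ nagumoSet (coeffMul f g) (α + β) r s := by
  refine ⟨mul_nonneg hA.1 hB.1, fun J => ?_⟩
  calc ‖coeffMul f g J‖
      ≤ ∑ K ∈ Iic J, ‖f K‖ * ‖g (J - K)‖ := norm_coeffMul_le f g J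
    _ ≤ ∑ K ∈ Iic J, (A * ∏ d, nagumoWeight (α d) r (s d) (K d)) *
          (B * ∏ d, nagumoWeight (β d) r (s d) (J d - K d)) := by
        gcongr with K
        · exact mul_nonneg hA.1 (prod_nonneg fun d _ => nagumoWeight_nonneg (hα d) hr _)
        · exact hA.2 K
        · exact hB.2 (J - K)
    _ = A * B * ∏ d, ∑ k ∈ Iic (J d),
          nagumoWeight (α d) r (s d) k * nagumoWeight (β d) r (s d) (J d - k) := by
        rw [← sum_Iic_prod_eq_prod_sum, mul_sum]
        refine sum_congr rfl fun K _ => ?_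
        rw [prod_mul_distrib]
        ring
    _ ≤ A * B * ∏ d, nagumoWeight ((α + β) d) r (s d) (J d) := by
        refine mul_le_mul_of_nonneg_left (prod_le_prod (fun d _ => ?_) fun d _ => ?_)
          (mul_nonneg hA.1 hB.1)
        · exact sum_nonneg fun k _ =>
            mul_nonneg (nagumoWeight_nonneg (hα d) hr _) (nagumoWeight_nonneg (hβ d) hr _)
        · exact sum_Iic_nagumoWeight_mul_le (hα d) (hβ d) (hs d) hr (J d)

theorem tsum_mul_mem_nagumoSet_coeffMul
    (hf : Summable fun J : Fin N → ℕ => ‖f J‖ * r ^ (∑ d, J d)) (hB : B ∈ nagumoSet g β r s)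
    (hβ : ∀ d, 1 ≤ β d) (hs : ∀ d, 0 ≤ s d) (hr : 0 < r) :
    (∑' J, ‖f J‖ * r ^ (∑ d, J d)) * B ∈ nagumoSet (coeffMul f g) β r s := by
  refine ⟨mul_nonneg (tsum_nonneg fun J => by positivity) hB.1, fun J => ?_⟩
  set W := ∏ d, nagumoWeight (β d) r (s d) (J d)
  have hW : 0 ≤ W := prod_nonneg fun d _ => nagumoWeight_nonneg (zero_le_one.trans (hβ d)) hr _
  calc ‖coeffMul f g J‖
      ≤ ∑ K ∈ Iic J, ‖f K‖ * ‖g (J - K)‖ := norm_coeffMul_le f g J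
    _ ≤ ∑ K ∈ Iic J, ‖f K‖ * (B * (W * r ^ (∑ d, K d))) := by
        gcongr with K hK
        refine (hB.2 (J - K)).trans (mul_le_mul_of_nonneg_left ?_ hB.1)
        rw [← prod_pow_eq_pow_sum, ← prod_mul_distrib]
        exact prod_le_prod (fun d _ => nagumoWeight_nonneg (zero_le_one.trans (hβ d)) hr _)
          fun d _ => nagumoWeight_sub_le (hβ d) (hs d) hr (mem_Iic.1 hK d)
    _ = (∑ K ∈ Iic J, ‖f K‖ * r ^ (∑ d, K d)) * B * W := by
        rw [sum_mul, sum_mul]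
        exact sum_congr rfl fun K _ => by ring
    _ ≤ (∑' K, ‖f K‖ * r ^ (∑ d, K d)) * B * W :=
        mul_le_mul_of_nonneg_right (mul_le_mul_of_nonneg_right
          (hf.sum_le_tsum _ fun K _ => by positivity) hB.1) hW

end NagumoNorm

theorem nagumoNorm_mul_general (N : ℕ) (ρ : Fin N → ℝ)
    (f g : (Fin N → ℕ) → ℂ) (hf : AnalyticCoeffs ρ f) (hg : AnalyticCoeffs ρ g)
    (s : Fin N → ℝ) (hs : ∀ d, 1 ≤ s d)
    (α : Fin N → ℝ) (hα : (∀ d, 1 ≤ α d) ∨ α = 0)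
    (β : Fin N → ℝ) (hβ : (∀ d, 1 ≤ β d) ∨ β = 0)
    (r : ℝ) (hr : 0 < r) (hrρ : ∀ d, r < ρ d) :
    nagumoNorm (coeffMul f g) (α + β) r s ≤ nagumoNorm f α r s * nagumoNorm g β r s := by
  have hfs := hf.summable_norm_mul_pow hr.le hrρ
  have hgs := hg.summable_norm_mul_pow hr.le hrρ
  have hs₀ : ∀ d, 0 ≤ s d := fun d => zero_le_one.trans (hs d)
  -- Split on `α = 0` rather than on `hα`: for `N = 0` both disjuncts of `hα` hold.
  by_cases hα₀ : α = 0 <;> by_cases hβ₀ : β = 0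
  · subst hα₀ hβ₀
    rw [add_zero, nagumoNorm_zero, nagumoNorm_zero, nagumoNorm_zero]
    exact tsum_norm_coeffMul_mul_pow_le hr.le hfs hgs
  · subst hα₀
    have hβ₁ := hβ.resolve_right hβ₀
    rw [zero_add, nagumoNorm_zero]
    exact nagumoNorm_le_of_mem hβ₀ (tsum_mul_mem_nagumoSet_coeffMul hfs
      (nagumoNorm_mem_nagumoSet hβ₀ hβ₁ hs₀ hr hgs) hβ₁ hs₀ hr)
  · subst hβ₀
    have hα₁ := hα.resolve_right hα₀
    rw [add_zero, nagumoNorm_zero, coeffMul_comm, mul_comm]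
    exact nagumoNorm_le_of_mem hα₀ (tsum_mul_mem_nagumoSet_coeffMul hgs
      (nagumoNorm_mem_nagumoSet hα₀ hα₁ hs₀ hr hfs) hα₁ hs₀ hr)
  · have hα₁ := hα.resolve_right hα₀
    have hβ₁ := hβ.resolve_right hβ₀
    have hαβ₀ : α + β ≠ 0 := by
      obtain ⟨d, -⟩ := Function.ne_iff.1 hα₀
      intro h
      have hd : α d + β d = 0 := congrFun h d
      linarith [hα₁ d, hβ₁ d]
    exact nagumoNorm_le_of_mem hαβ₀ (mul_mem_nagumoSet_coeffMul
      (nagumoNorm_mem_nagumoSet hα₀ hα₁ hs₀ hr hfs) (nagumoNorm_mem_nagumoSet hβ₀ hβ₁ hs₀ hr hgs)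
      (fun d => zero_le_one.trans (hα₁ d)) (fun d => zero_le_one.trans (hβ₁ d)) hs hr)

/-- For `f, g` analytic on `D_{ρ₁,...,ρ_N}`, `s ∈ [1,∞)^N`, `α, β ∈ [1,∞)^N ∪ {0}` and
`0 < r < min(ρ₁,...,ρ_N)`: `‖f·g‖_{α+β,r,s} ≤ ‖f‖_{α,r,s} · ‖g‖_{β,r,s}`. -/
theorem nagumoNorm_mul (N : ℕ) (ρ : Fin N → ℝ) (hρ : ∀ d, 0 < ρ d)
    (f g : (Fin N → ℕ) → ℂ) (hf : AnalyticCoeffs ρ f) (hg : AnalyticCoeffs ρ g)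
    (s : Fin N → ℝ) (hs : ∀ d, 1 ≤ s d)
    (α : Fin N → ℝ) (hα : (∀ d, 1 ≤ α d) ∨ α = 0)
    (β : Fin N → ℝ) (hβ : (∀ d, 1 ≤ β d) ∨ β = 0)
    (r : ℝ) (hr : 0 < r) (hrρ : ∀ d, r < ρ d) :
    nagumoNorm (coeffMul f g) (α + β) r s ≤ nagumoNorm f α r s * nagumoNorm g β r s :=
  nagumoNorm_mul_general N ρ f g hf hg s hs α hα β hβ r hr hrρ
end

section
/- Let p ≥ 1 be a real number, j ∈ ℕ, and a, b > 0. Then binom(j+p−1, j) · a^j · b^{p−1} ≤ (a+b)^{j+p−1}, where binom(j+p−1, j) = Γ(j+p)/(Γ(j+1)Γ(p)). Consequently, for every ε > 0: binom(j+p−1, j) ≤ (1+ε)^j · ((1+ε)/ε)^{p−1}. -/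
/-!
By the Beta integral, `Γ(j+1) Γ(p) / Γ(j+p) = j B(j, p) = j ∫₀¹ t^(j-1) (1-t)^(p-1) dt`.
As `(1-t)^(p-1) ≥ (1-x)^(p-1)` on `[0, x]` when `p ≥ 1`, the integral is at least
`x^j (1-x)^(p-1) / j`. This is the inequality for `a + b = 1`, with `x = a`, and the general
case follows by homogeneity. Taking `a = 1`, `b = ε` gives the second bound.
-/

open Real intervalIntegral MeasureTheory

theorem Real.Gamma_mul_Gamma_eq_integral {s q : ℝ} (hs : 0 < s) (hq : 0 < q) :
    Gamma s * Gamma q = Gamma (s + q) * ∫ t in (0 : ℝ)..1, t ^ (s - 1) * (1 - t) ^ (q - 1) := by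
  have hβ := Complex.Gamma_mul_Gamma_eq_betaIntegral (s := s) (t := q) (by simpa) (by simpa)
  have hint :
      Complex.betaIntegral s q = ↑(∫ t in (0 : ℝ)..1, t ^ (s - 1) * (1 - t) ^ (q - 1)) := by
    rw [Complex.betaIntegral, ← intervalIntegral.integral_ofReal]
    refine integral_congr fun t ht => ?_
    rw [Set.uIcc_of_le zero_le_one] at ht
    push_cast
    rw [Complex.ofReal_cpow ht.1, Complex.ofReal_cpow (sub_nonneg.2 ht.2)]
    push_cast
    rfl
  rw [hint, ← Complex.ofReal_add] at hβ
  simp only [Complex.Gamma_ofReal] at hβ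
  exact_mod_cast hβ

lemma rpow_mul_one_sub_rpow_le_mul_integral {s q x : ℝ} (hs : 0 < s) (hq : 1 ≤ q)
    (hx₀ : 0 ≤ x) (hx₁ : x ≤ 1) :
    x ^ s * (1 - x) ^ (q - 1) ≤ s * ∫ t in (0 : ℝ)..1, t ^ (s - 1) * (1 - t) ^ (q - 1) := by
  have hcont : Continuous fun t : ℝ => (1 - t) ^ (q - 1) :=
    (continuous_const.sub continuous_id).rpow_const fun _ => Or.inr (by linarith)
  have hint :
      ∀ a b : ℝ, IntervalIntegrable (fun t => t ^ (s - 1) * (1 - t) ^ (q - 1)) volume a b :=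
    fun a b => (intervalIntegrable_rpow' (by linarith)).mul_continuousOn hcont.continuousOn
  have h_lower : ∫ t in (0 : ℝ)..x, t ^ (s - 1) * (1 - x) ^ (q - 1)
      ≤ ∫ t in (0 : ℝ)..x, t ^ (s - 1) * (1 - t) ^ (q - 1) := by
    refine integral_mono_on hx₀ ((intervalIntegrable_rpow' (by linarith)).mul_const _) (hint 0 x)
      fun t ht => mul_le_mul_of_nonneg_left ?_ (rpow_nonneg ht.1 _)
    exact rpow_le_rpow (by linarith) (by linarith [ht.2]) (by linarith)
  have h_interval : ∫ t in (0 : ℝ)..x, t ^ (s - 1) * (1 - t) ^ (q - 1)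
      ≤ ∫ t in (0 : ℝ)..1, t ^ (s - 1) * (1 - t) ^ (q - 1) := by
    refine integral_mono_interval le_rfl hx₀ hx₁ ?_ (hint 0 1)
    filter_upwards [ae_restrict_mem measurableSet_Ioc] with t ht
    exact mul_nonneg (rpow_nonneg ht.1.le _) (rpow_nonneg (by linarith [ht.2]) _)
  have h_eval :
      ∫ t in (0 : ℝ)..x, t ^ (s - 1) * (1 - x) ^ (q - 1) = x ^ s / s * (1 - x) ^ (q - 1) := by
    rw [intervalIntegral.integral_mul_const, integral_rpow (Or.inl (by linarith))]
    simp [hs.ne']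
  calc x ^ s * (1 - x) ^ (q - 1) = s * (x ^ s / s * (1 - x) ^ (q - 1)) := by field_simp
    _ ≤ _ := mul_le_mul_of_nonneg_left (h_eval ▸ h_lower.trans h_interval) hs.le

lemma Gamma_add_mul_rpow_mul_one_sub_rpow_le {s q x : ℝ} (hs : 0 ≤ s) (hq : 1 ≤ q)
    (hx₀ : 0 ≤ x) (hx₁ : x ≤ 1) :
    Gamma (s + q) * (x ^ s * (1 - x) ^ (q - 1)) ≤ Gamma (s + 1) * Gamma q := by
  rcases hs.eq_or_lt with rfl | hs
  · have : (1 - x) ^ (q - 1) ≤ 1 := rpow_le_one (by linarith) (by linarith) (by linarith)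
    simpa using mul_le_of_le_one_right (Gamma_pos_of_pos (by linarith)).le this
  calc Gamma (s + q) * (x ^ s * (1 - x) ^ (q - 1))
      ≤ Gamma (s + q) * (s * ∫ t in (0 : ℝ)..1, t ^ (s - 1) * (1 - t) ^ (q - 1)) :=
        mul_le_mul_of_nonneg_left (rpow_mul_one_sub_rpow_le_mul_integral hs hq hx₀ hx₁)
          (Gamma_pos_of_pos (by linarith)).le
    _ = s * (Gamma s * Gamma q) := by
        rw [Real.Gamma_mul_Gamma_eq_integral hs (by linarith)]; ring
    _ = Gamma (s + 1) * Gamma q := by rw [Gamma_add_one hs.ne']; ring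

lemma Gamma_div_mul_rpow_mul_rpow_le {s q a b : ℝ} (hs : 0 ≤ s) (hq : 1 ≤ q)
    (ha : 0 ≤ a) (hb : 0 ≤ b) (hab : 0 < a + b) :
    Gamma (s + q) / (Gamma (s + 1) * Gamma q) * a ^ s * b ^ (q - 1) ≤ (a + b) ^ (s + q - 1) := by
  set x := a / (a + b)
  have hxa : x * (a + b) = a := div_mul_cancel₀ a hab.ne'
  have hxb : (1 - x) * (a + b) = b := by rw [sub_mul, hxa]; ring
  have hx₀ : 0 ≤ x := div_nonneg ha hab.le
  have hx₁ : x ≤ 1 := div_le_one_of_le₀ (by linarith) hab.le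
  have hscale : a ^ s * b ^ (q - 1) = x ^ s * (1 - x) ^ (q - 1) * (a + b) ^ (s + q - 1) :=
    calc a ^ s * b ^ (q - 1) = (x * (a + b)) ^ s * ((1 - x) * (a + b)) ^ (q - 1) := by
          rw [hxa, hxb]
      _ = _ := by
          rw [mul_rpow hx₀ hab.le, mul_rpow (by linarith) hab.le, add_sub_assoc, rpow_add hab]
          ring
  have hΓ : 0 < Gamma (s + 1) * Gamma q :=
    mul_pos (Gamma_pos_of_pos (by linarith)) (Gamma_pos_of_pos (by linarith))
  have hbound := Gamma_add_mul_rpow_mul_one_sub_rpow_le hs hq hx₀ hx₁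
  rw [mul_assoc, hscale, ← mul_assoc, div_mul_eq_mul_div]
  exact mul_le_of_le_one_left (rpow_nonneg hab.le _) ((div_le_one hΓ).2 hbound)

/-- For real `p ≥ 1`, `j ∈ ℕ` and `a, b > 0`:
`binom(j+p−1,j) · a^j · b^{p−1} ≤ (a+b)^{j+p−1}` where `binom(j+p−1,j) = Γ(j+p)/(Γ(j+1)Γ(p))`;
consequently, for every `ε > 0`, `binom(j+p−1,j) ≤ (1+ε)^j · ((1+ε)/ε)^{p−1}`. -/
theorem genBinom_bound (p : ℝ) (hp : 1 ≤ p) (j : ℕ) (a b : ℝ) (ha : 0 < a) (hb : 0 < b) :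
    Real.Gamma ((j : ℝ) + p) / (Real.Gamma ((j : ℝ) + 1) * Real.Gamma p) * a ^ j *
        b ^ (p - 1) ≤ (a + b) ^ ((j : ℝ) + p - 1) ∧
    ∀ ε : ℝ, 0 < ε →
      Real.Gamma ((j : ℝ) + p) / (Real.Gamma ((j : ℝ) + 1) * Real.Gamma p) ≤
        (1 + ε) ^ j * ((1 + ε) / ε) ^ (p - 1) := by
  have hbound : ∀ {u v : ℝ}, 0 ≤ u → 0 < v →
      Gamma (j + p) / (Gamma (j + 1) * Gamma p) * u ^ j * v ^ (p - 1) ≤ (u + v) ^ (j + p - 1) :=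
    fun hu hv => by
      simpa only [rpow_natCast] using
        Gamma_div_mul_rpow_mul_rpow_le j.cast_nonneg hp hu hv.le (by linarith)
  refine ⟨hbound ha.le hb, fun ε hε => ?_⟩
  have h := hbound zero_le_one hε
  rw [one_pow, mul_one, show (j : ℝ) + p - 1 = j + (p - 1) by ring,
    rpow_add (by linarith), rpow_natCast] at h
  rw [div_rpow (by linarith) hε.le, mul_div_assoc', le_div_iff₀ (rpow_pos_of_pos hε _)]
  exact h
end

section
/- In the setting described (regular moment sequences m₀ of order s₀ > 0 and m₁,...,m_N of orders s₁,...,s_N ≥ 1, polynomial nonlinearity P with analytic coefficients, analytic initial data φ₀,...,φ_{κ−1}, inhomogeneity f̃ with analytic coefficients, and the Assumption Σ_{ℓ=1}^n rℓ iℓ − v_{i,q,r} < κ for all tuples), the Cauchy problem ∂_{m₀;t}^κ u − P(t,x,(∂_{m₀;t}^i ∂_{m;x}^q u)) = f̃(t,x), ∂_{m₀;t}^j u|_{t=0} = φ_j (0 ≤ j < κ), is formally well-posed: it admits a unique formal power series solution ũ(t,x) = Σ_{j≥0} u_j(x) t^j/m₀(j), and all its coefficients u_j are analytic on the full polydisc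 D_{ρ₁,...,ρ_N}. -/
/-- A regular moment sequence of order `s > 0`. -/
def IsRegularMomentSeq (m : ℕ → ℝ) (s : ℝ) : Prop :=
  m 0 = 1 ∧ (∀ j, 0 < m j) ∧
    ∃ a A : ℝ, 0 < a ∧ 0 < A ∧ ∀ j : ℕ,
      a * ((j : ℝ) + 1) ^ s ≤ m (j + 1) / m j ∧ m (j + 1) / m j ≤ A * ((j : ℝ) + 1) ^ s

/-- A monomial `t^v a(t,x) ∏_{ℓ=1}^n (∂_{m₀;t}^{iℓ}∂_{m;x}^{qℓ}u)^{rℓ}` of the nonlinearity,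
recorded through its combinatorial data. -/
structure MomentMonomial (N κ : ℕ) where
  n : ℕ
  npos : 0 < n
  i : Fin n → ℕ
  i_lt : ∀ ℓ, i ℓ < κ
  q : Fin n → Fin N → ℕ
  r : Fin n → ℕ
  r_pos : ∀ ℓ, 0 < r ℓ
  v : ℕ

/-- A formal series `Σ_j u_j(x) t^j/m₀(j)` is represented by the family `U` of the Taylor
coefficients of its coefficients `u_j`.  `tmul` is the representation of the ordinary
product of two such series:
`(U·V)_j = Σ_{k=0}^{j} (m₀(j)/(m₀(k)m₀(j−k))) u_k v_{j−k}`. -/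
noncomputable def tmul (N : ℕ) (m₀ : ℕ → ℝ) (U V : ℕ → (Fin N → ℕ) → ℂ) :
    ℕ → (Fin N → ℕ) → ℂ :=
  fun j J => ∑ k ∈ Finset.range (j + 1),
    ((m₀ j / (m₀ k * m₀ (j - k)) : ℝ) : ℂ) * coeffMul (U k) (V (j - k)) J

/-- The constant series `1`. -/
noncomputable def sOne (N : ℕ) : ℕ → (Fin N → ℕ) → ℂ :=
  fun j J => if j = 0 ∧ J = 0 then 1 else 0

/-- Finite products of formal series. -/
noncomputable def sProd (N : ℕ) (m₀ : ℕ → ℝ) :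
    (n : ℕ) → (Fin n → ℕ → (Fin N → ℕ) → ℂ) → ℕ → (Fin N → ℕ) → ℂ
  | 0, _ => sOne N
  | n + 1, F => tmul N m₀ (F 0) (sProd N m₀ n fun k => F k.succ)

/-- `p`-th power of a formal series. -/
noncomputable def spow (N : ℕ) (m₀ : ℕ → ℝ) (p : ℕ) (U : ℕ → (Fin N → ℕ) → ℂ) :
    ℕ → (Fin N → ℕ) → ℂ :=
  sProd N m₀ p fun _ => U

/-- Multiplication by `t^v`. -/
noncomputable def tpowMul (N : ℕ) (m₀ : ℕ → ℝ) (v : ℕ) (U : ℕ → (Fin N → ℕ) → ℂ) :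
    ℕ → (Fin N → ℕ) → ℂ :=
  fun j J => if v ≤ j then ((m₀ j / m₀ (j - v) : ℝ) : ℂ) * U (j - v) J else 0

/-- The iterated moment derivative `∂_{m;x}^q`, acting coefficientwise. -/
noncomputable def momentDerivQ {N : ℕ} (m : Fin N → ℕ → ℝ) (q : Fin N → ℕ)
    (f : (Fin N → ℕ) → ℂ) : (Fin N → ℕ) → ℂ :=
  fun J => f (J + q) * ((∏ d, m d (J d + q d) / m d (J d) : ℝ) : ℂ)

/-- The nonlinearity
`P(t,x,(∂_{m₀;t}^i∂_{m;x}^q u)) = Σ_τ t^{v_τ} a_τ(t,x) ∏_ℓ (∂_{m₀;t}^{iℓ}∂_{m;x}^{qℓ}u)^{rℓ}`,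
applied to the formal series represented by `U`. -/
noncomputable def Papp (N κ : ℕ) (m₀ : ℕ → ℝ) (m : Fin N → ℕ → ℝ)
    (ι : Type) [Fintype ι] (M : ι → MomentMonomial N κ)
    (A : ι → ℕ → (Fin N → ℕ) → ℂ) (U : ℕ → (Fin N → ℕ) → ℂ) :
    ℕ → (Fin N → ℕ) → ℂ :=
  fun j J => ∑ τ : ι,
    tpowMul N m₀ (M τ).v
      (tmul N m₀ (A τ)
        (sProd N m₀ (M τ).n fun ℓ =>
          spow N m₀ ((M τ).r ℓ) fun j' =>
            momentDerivQ m ((M τ).q ℓ) (U (j' + (M τ).i ℓ)))) j J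

/-- `U` represents a formal solution of the Cauchy problem
`∂_{m₀;t}^κ u − P(t,x,(∂_{m₀;t}^i∂_{m;x}^q u)) = f̃`, `∂_{m₀;t}^j u|_{t=0} = φ_j`. -/
def SolvesEq (N κ : ℕ) (m₀ : ℕ → ℝ) (m : Fin N → ℕ → ℝ)
    (ι : Type) [Fintype ι] (M : ι → MomentMonomial N κ)
    (A : ι → ℕ → (Fin N → ℕ) → ℂ) (F : ℕ → (Fin N → ℕ) → ℂ)
    (φ : Fin κ → (Fin N → ℕ) → ℂ) (U : ℕ → (Fin N → ℕ) → ℂ) : Prop :=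
  (∀ j : Fin κ, U j = φ j) ∧
  ∀ j : ℕ, U (j + κ) = fun J => Papp N κ m₀ m ι M A U j J + F j J

/-!
Every monomial of `P` involves only time derivatives of order `< κ`, so the equation expresses
`u_{j+κ}` through `u_0, …, u_{j+κ-1}`: the Cauchy problem is a causal recursion and has exactly
one formal solution. Analyticity then propagates along the recursion. Taylor coefficient
families of functions analytic on the polydisc are closed under sums, scalar multiples and
Cauchy products, and `∂_{m;x}^q` multiplies the `J`-th coefficient by
`∏_d m_d(J_d + q_d)/m_d(J_d)`, which grows only polynomially in `J` for regular moment
sequences and is therefore absorbed by passing to a slightly larger polyradius.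
-/

open Finset

section CausalRecursion

variable {α : Type*} {κ : ℕ}

def IsCausal (κ : ℕ) (Φ : (ℕ → α) → ℕ → α) : Prop :=
  ∀ U V j, (∀ k < j + κ, U k = V k) → Φ U j = Φ V j

def IsRecSolution (φ : Fin κ → α) (Φ : (ℕ → α) → ℕ → α) (U : ℕ → α) : Prop :=
  (∀ j : Fin κ, U j = φ j) ∧ ∀ j, U (j + κ) = Φ U j

noncomputable def recSolution [Inhabited α] (φ : Fin κ → α) (Φ : (ℕ → α) → ℕ → α) (j : ℕ) : α :=
  if h : j < κ then φ ⟨j, h⟩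
  else Φ (fun k => if _ : k < j then recSolution φ Φ k else default) (j - κ)
termination_by j

variable {φ : Fin κ → α} {Φ : (ℕ → α) → ℕ → α}

theorem IsCausal.isRecSolution_recSolution [Inhabited α] (hΦ : IsCausal κ Φ) :
    IsRecSolution φ Φ (recSolution φ Φ) := by
  refine ⟨fun j => by rw [recSolution, dif_pos j.isLt], fun j => ?_⟩
  rw [recSolution, dif_neg (by omega), Nat.add_sub_cancel]
  exact hΦ _ _ j fun k hk => dif_pos hk

theorem IsCausal.eq_of_isRecSolution (hΦ : IsCausal κ Φ) {U V : ℕ → α}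
    (hU : IsRecSolution φ Φ U) (hV : IsRecSolution φ Φ V) : U = V := by
  funext j
  induction j using Nat.strong_induction_on with
  | _ j ih =>
    by_cases hj : j < κ
    · exact (hU.1 ⟨j, hj⟩).trans (hV.1 ⟨j, hj⟩).symm
    · obtain ⟨i, rfl⟩ : ∃ i, j = i + κ := ⟨j - κ, by omega⟩
      rw [hU.2, hV.2]
      exact hΦ U V i ih

theorem IsCausal.existsUnique_isRecSolution [Inhabited α] (hΦ : IsCausal κ Φ) :
    ∃! U : ℕ → α, IsRecSolution φ Φ U :=
  ⟨recSolution φ Φ, hΦ.isRecSolution_recSolution,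
    fun _ hV => hΦ.eq_of_isRecSolution hV hΦ.isRecSolution_recSolution⟩

/-- Causality lets `hPΦ` be applied to truncations of `U` padded with `x₀`. -/
theorem IsCausal.forall_of_isRecSolution (hΦ : IsCausal κ Φ) {P : α → Prop} {x₀ : α}
    (hx₀ : P x₀) (hφ : ∀ j, P (φ j)) (hPΦ : ∀ U, (∀ k, P (U k)) → ∀ j, P (Φ U j))
    {U : ℕ → α} (hU : IsRecSolution φ Φ U) (j : ℕ) : P (U j) := by
  induction j using Nat.strong_induction_on with
  | _ j ih =>
    by_cases hj : j < κ
    · exact hU.1 ⟨j, hj⟩ ▸ hφ _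
    · obtain ⟨i, rfl⟩ : ∃ i, j = i + κ := ⟨j - κ, by omega⟩
      have htrunc : Φ U i = Φ (fun k => if k < i + κ then U k else x₀) i :=
        hΦ _ _ i fun k hk => (if_pos hk).symm
      rw [hU.2, htrunc]
      refine hPΦ _ (fun k => ?_) i
      split_ifs with hk
      exacts [ih k hk, hx₀]

end CausalRecursion

section Causality

variable {N : ℕ} {m₀ : ℕ → ℝ}

theorem tmul_congr {U U' V V' : ℕ → (Fin N → ℕ) → ℂ} {j : ℕ}
    (hU : ∀ k ≤ j, U k = U' k) (hV : ∀ k ≤ j, V k = V' k) :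
    tmul N m₀ U V j = tmul N m₀ U' V' j := by
  funext J
  refine sum_congr rfl fun k hk => ?_
  rw [hU k (Nat.lt_succ_iff.mp (mem_range.mp hk)), hV (j - k) (Nat.sub_le _ _)]

theorem sProd_congr {j : ℕ} : ∀ {n : ℕ} {F G : Fin n → ℕ → (Fin N → ℕ) → ℂ},
    (∀ ℓ, ∀ k ≤ j, F ℓ k = G ℓ k) → ∀ k ≤ j, sProd N m₀ n F k = sProd N m₀ n G k
  | 0, _, _, _, _, _ => rfl
  | _ + 1, _, _, h, _, hk =>
    tmul_congr (fun k' hk' => h 0 k' (hk'.trans hk))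
      (fun k' hk' => sProd_congr (fun ℓ => h ℓ.succ) k' (hk'.trans hk))

theorem Papp_congr {κ : ℕ} {m : Fin N → ℕ → ℝ} {ι : Type} [Fintype ι]
    {M : ι → MomentMonomial N κ} {A : ι → ℕ → (Fin N → ℕ) → ℂ}
    {U V : ℕ → (Fin N → ℕ) → ℂ} {j : ℕ} (h : ∀ k < j + κ, U k = V k) :
    Papp N κ m₀ m ι M A U j = Papp N κ m₀ m ι M A V j := by
  funext J
  refine sum_congr rfl fun τ _ => ?_
  unfold tpowMul
  split_ifs with hv
  · refine congrArg₂ _ rfl (congrFun (tmul_congr (fun _ _ => rfl) fun k hk => ?_) J)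
    refine sProd_congr (fun ℓ k' hk' => sProd_congr (fun _ k'' hk'' => ?_) k' hk') k (by omega)
    rw [h _ (by have := (M τ).i_lt ℓ; omega)]
  · rfl

end Causality

theorem summable_sum_Iic_mul_sub {N : ℕ} {S T : (Fin N → ℕ) → ℝ} (hS : Summable S)
    (hT : Summable T) (hS0 : 0 ≤ S) (hT0 : 0 ≤ T) :
    Summable fun J => ∑ K ∈ Iic J, S K * T (J - K) := by
  refine summable_of_sum_le (c := ∑' p : (Fin N → ℕ) × (Fin N → ℕ), S p.1 * T p.2)
    (fun J => sum_nonneg fun K _ => mul_nonneg (hS0 K) (hT0 _)) fun u => ?_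
  have hinj : Set.InjOn (fun p : (_ : Fin N → ℕ) × (Fin N → ℕ) => (p.2, p.1 - p.2))
      (u.sigma Iic) := by
    rintro ⟨J, K⟩ hp ⟨J', K'⟩ hp' he
    simp only [coe_sigma, Set.mem_sigma_iff, mem_coe, mem_Iic, Prod.mk.injEq] at hp hp' he
    obtain ⟨rfl, h⟩ := he
    rw [(tsub_left_inj hp.2 hp'.2).mp h]
  calc ∑ J ∈ u, ∑ K ∈ Iic J, S K * T (J - K)
      = ∑ p ∈ (u.sigma Iic).image fun p => (p.2, p.1 - p.2), S p.1 * T p.2 := by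
        rw [sum_sigma', sum_image hinj]
    _ ≤ ∑' p : (Fin N → ℕ) × (Fin N → ℕ), S p.1 * T p.2 :=
        (hS.mul_of_nonneg hT hS0 hT0).sum_le_tsum _ fun p _ => mul_nonneg (hS0 _) (hT0 _)

theorem summable_succ_pow_mul_geometric (K : ℕ) {x : ℝ} (hx0 : 0 ≤ x) (hx1 : x < 1) :
    Summable fun n : ℕ => ((n : ℝ) + 1) ^ K * x ^ n := by
  have hx : ‖x‖ < 1 := by rwa [Real.norm_of_nonneg hx0]
  have hexpand : ∀ n : ℕ, ∑ i ∈ range (K + 1), (n : ℝ) ^ i * x ^ n * K.choose i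
      = ((n : ℝ) + 1) ^ K * x ^ n := fun n => by
    rw [add_pow, sum_mul]
    exact sum_congr rfl fun i _ => by ring
  exact (summable_sum fun i _ =>
    (summable_pow_mul_geometric_of_norm_lt_one i hx).mul_right _).congr hexpand

theorem exists_succ_pow_mul_pow_le (K : ℕ) {r r' : ℝ} (hr : 0 ≤ r) (hrr' : r < r') :
    ∃ c, ∀ n : ℕ, ((n : ℝ) + 1) ^ K * r ^ n ≤ c * r' ^ n := by
  have hr' : 0 < r' := hr.trans_lt hrr'
  have hsum := summable_succ_pow_mul_geometric K (div_nonneg hr hr'.le)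
    ((div_lt_one hr').mpr hrr')
  refine ⟨∑' n : ℕ, ((n : ℝ) + 1) ^ K * (r / r') ^ n, fun n => ?_⟩
  calc ((n : ℝ) + 1) ^ K * r ^ n = ((n : ℝ) + 1) ^ K * (r / r') ^ n * r' ^ n := by
        rw [div_pow, mul_assoc, div_mul_cancel₀ _ (pow_ne_zero _ hr'.ne')]
    _ ≤ _ := by gcongr; exact hsum.le_tsum n fun k _ => by positivity

namespace IsRegularMomentSeq

variable {m : ℕ → ℝ} {s : ℝ}

theorem exists_div_succ_le (hm : IsRegularMomentSeq m s) :
    ∃ A : ℝ, 0 < A ∧ ∃ E : ℕ, ∀ n : ℕ, m (n + 1) / m n ≤ A * ((n : ℝ) + 1) ^ E := by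
  obtain ⟨-, -, _, A, -, hA, hbound⟩ := hm
  refine ⟨A, hA, ⌈s⌉₊, fun n => (hbound n).2.trans ?_⟩
  rw [← Real.rpow_natCast]
  gcongr
  exacts [by linarith [n.cast_nonneg (α := ℝ)], Nat.le_ceil s]

theorem exists_div_le (hm : IsRegularMomentSeq m s) (q : ℕ) :
    ∃ C : ℝ, 0 ≤ C ∧ ∃ K : ℕ, ∀ n : ℕ, m (n + q) / m n ≤ C * ((n : ℝ) + 1) ^ K := by
  induction q with
  | zero => exact ⟨1, zero_le_one, 0, fun n => by simp [div_self (hm.2.1 n).ne']⟩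
  | succ q ih =>
    obtain ⟨C, hC, K, hK⟩ := ih
    obtain ⟨A, hA, E, hE⟩ := hm.exists_div_succ_le
    refine ⟨A * ((q : ℝ) + 1) ^ E * C, by positivity, E + K, fun n => ?_⟩
    have hpos := hm.2.1
    have hlin : ((n + q : ℕ) : ℝ) + 1 ≤ ((q : ℝ) + 1) * ((n : ℝ) + 1) := by
      push_cast; nlinarith [n.cast_nonneg (α := ℝ), q.cast_nonneg (α := ℝ)]
    calc m (n + (q + 1)) / m n = m (n + q + 1) / m (n + q) * (m (n + q) / m n) := by
          rw [← add_assoc, div_mul_div_cancel₀ (hpos _).ne']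
      _ ≤ A * (((q : ℝ) + 1) * ((n : ℝ) + 1)) ^ E * (C * ((n : ℝ) + 1) ^ K) := by
          gcongr
          exacts [(div_pos (hpos _) (hpos _)).le, (hE _).trans (by gcongr), hK n]
      _ = A * ((q : ℝ) + 1) ^ E * C * ((n : ℝ) + 1) ^ (E + K) := by rw [mul_pow, pow_add]; ring

theorem exists_div_mul_pow_le (hm : IsRegularMomentSeq m s) (q : ℕ) {r r' : ℝ} (hr : 0 ≤ r)
    (hrr' : r < r') : ∃ C : ℝ, ∀ n : ℕ, m (n + q) / m n * r ^ n ≤ C * r' ^ (n + q) := by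
  obtain ⟨C, hC, K, hK⟩ := hm.exists_div_le q
  obtain ⟨c, hc⟩ := exists_succ_pow_mul_pow_le K hr hrr'
  have hr'q : r' ^ q ≠ 0 := pow_ne_zero _ (hr.trans_lt hrr').ne'
  refine ⟨C * c / r' ^ q, fun n => ?_⟩
  calc m (n + q) / m n * r ^ n ≤ C * ((n : ℝ) + 1) ^ K * r ^ n := by gcongr; exact hK n
    _ ≤ C * (c * r' ^ n) := by rw [mul_assoc]; exact mul_le_mul_of_nonneg_left (hc n) hC
    _ = C * c / r' ^ q * r' ^ (n + q) := by field_simp; ring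

end IsRegularMomentSeq

section AnalyticCoeffs

variable {N : ℕ} {ρ : Fin N → ℝ} {f g : (Fin N → ℕ) → ℂ}

theorem prod_pow_nonneg {r : Fin N → ℝ} (hr : ∀ d, 0 ≤ r d) (J : Fin N → ℕ) :
    0 ≤ ∏ d, r d ^ J d :=
  prod_nonneg fun d _ => pow_nonneg (hr d) _

theorem analyticCoeffs_zero : AnalyticCoeffs ρ 0 := fun _ _ _ => by
  simp

theorem AnalyticCoeffs.add (hf : AnalyticCoeffs ρ f) (hg : AnalyticCoeffs ρ g) :
    AnalyticCoeffs ρ (f + g) := fun r h0 h1 =>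
  ((hf r h0 h1).add (hg r h0 h1)).of_nonneg_of_le
    (fun J => mul_nonneg (norm_nonneg _) (prod_pow_nonneg h0 J))
    fun J => by rw [← add_mul]; gcongr; exacts [prod_pow_nonneg h0 J, norm_add_le _ _]

theorem AnalyticCoeffs.const_mul (c : ℂ) (hf : AnalyticCoeffs ρ f) :
    AnalyticCoeffs ρ fun J => c * f J := fun r h0 h1 =>
  ((hf r h0 h1).mul_left ‖c‖).congr fun J => by rw [norm_mul, mul_assoc]

theorem analyticCoeffs_sum {α : Type*} {s : Finset α} {F : α → (Fin N → ℕ) → ℂ}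
    (h : ∀ a ∈ s, AnalyticCoeffs ρ (F a)) : AnalyticCoeffs ρ fun J => ∑ a ∈ s, F a J := by
  classical
  induction s using Finset.induction_on with
  | empty => exact analyticCoeffs_zero
  | insert a s ha ih =>
    simp only [sum_insert ha]
    exact (h a (mem_insert_self a s)).add (ih fun b hb => h b (mem_insert_of_mem hb))

theorem prod_pow_eq_mul_prod_pow_sub (r : Fin N → ℝ) {J K : Fin N → ℕ} (hKJ : K ≤ J) :
    ∏ d, r d ^ J d = (∏ d, r d ^ K d) * ∏ d, r d ^ (J - K) d := by
  rw [← prod_mul_distrib]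
  refine prod_congr rfl fun d _ => ?_
  rw [← pow_add, Pi.sub_apply, add_tsub_cancel_of_le (hKJ d)]

theorem analyticCoeffs_coeffMul (hf : AnalyticCoeffs ρ f) (hg : AnalyticCoeffs ρ g) :
    AnalyticCoeffs ρ (coeffMul f g) := by
  intro r h0 h1
  have hw := prod_pow_nonneg h0
  refine (summable_sum_Iic_mul_sub (hf r h0 h1) (hg r h0 h1)
    (fun K => mul_nonneg (norm_nonneg _) (hw K))
    (fun K => mul_nonneg (norm_nonneg _) (hw K))).of_nonneg_of_le
    (fun J => mul_nonneg (norm_nonneg _) (hw J)) fun J => ?_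
  calc ‖coeffMul f g J‖ * ∏ d, r d ^ J d
      ≤ (∑ K ∈ Iic J, ‖f K‖ * ‖g (J - K)‖) * ∏ d, r d ^ J d := by
        refine mul_le_mul_of_nonneg_right ?_ (hw J)
        exact (norm_sum_le _ _).trans_eq (sum_congr rfl fun K _ => norm_mul _ _)
    _ = ∑ K ∈ Iic J, ‖f K‖ * (∏ d, r d ^ K d) * (‖g (J - K)‖ * ∏ d, r d ^ (J - K) d) := by
        rw [sum_mul]
        refine sum_congr rfl fun K hK => ?_
        rw [prod_pow_eq_mul_prod_pow_sub r (mem_Iic.mp hK)]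
        ring

theorem analyticCoeffs_momentDerivQ {s : Fin N → ℝ} {m : Fin N → ℕ → ℝ}
    (hm : ∀ d, IsRegularMomentSeq (m d) (s d)) (q : Fin N → ℕ) (hf : AnalyticCoeffs ρ f) :
    AnalyticCoeffs ρ (momentDerivQ m q f) := by
  intro r h0 h1
  set r' : Fin N → ℝ := fun d => (r d + ρ d) / 2
  have hrr' : ∀ d, r d < r' d := fun d => by simp only [r']; linarith [h1 d]
  have hr'ρ : ∀ d, r' d < ρ d := fun d => by simp only [r']; linarith [h1 d]
  choose C hC using fun d => (hm d).exists_div_mul_pow_le (q d) (h0 d) (hrr' d)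
  have hshift : Summable fun J => ‖f (J + q)‖ * ∏ d, r' d ^ (J d + q d) :=
    (hf r' (fun d => (h0 d).trans (hrr' d).le) hr'ρ).comp_injective (add_left_injective q)
  have hratio : ∀ d k n, 0 ≤ m d k / m d n := fun d _ _ =>
    (div_pos ((hm d).2.1 _) ((hm d).2.1 _)).le
  refine (hshift.mul_left (∏ d, C d)).of_nonneg_of_le
    (fun J => mul_nonneg (norm_nonneg _) (prod_pow_nonneg h0 J)) fun J => ?_
  calc ‖momentDerivQ m q f J‖ * ∏ d, r d ^ J d
      = ‖f (J + q)‖ * ∏ d, m d (J d + q d) / m d (J d) * r d ^ J d := by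
        rw [momentDerivQ, norm_mul, Complex.norm_real, Real.norm_of_nonneg (prod_nonneg fun d _ => hratio d _ _),
          mul_assoc, prod_mul_distrib]
    _ ≤ ‖f (J + q)‖ * ∏ d, C d * r' d ^ (J d + q d) := by
        refine mul_le_mul_of_nonneg_left (prod_le_prod (fun d _ => ?_) fun d _ => hC d (J d))
          (norm_nonneg _)
        exact mul_nonneg (hratio d _ _) (pow_nonneg (h0 d) _)
    _ = (∏ d, C d) * (‖f (J + q)‖ * ∏ d, r' d ^ (J d + q d)) := by
        rw [prod_mul_distrib]; ring

end AnalyticCoeffs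

section FormalSeries

variable {N : ℕ} {ρ : Fin N → ℝ} {m₀ : ℕ → ℝ}

theorem analyticCoeffs_sOne (j : ℕ) : AnalyticCoeffs ρ (sOne N j) := fun _ _ _ =>
  summable_of_ne_finset_zero (s := {0}) fun J hJ => by
    simp [sOne, mem_singleton.not.mp hJ]

theorem analyticCoeffs_tpowMul {v : ℕ} {U : ℕ → (Fin N → ℕ) → ℂ}
    (hU : ∀ k, AnalyticCoeffs ρ (U k)) (j : ℕ) : AnalyticCoeffs ρ (tpowMul N m₀ v U j) := by
  unfold tpowMul
  split_ifs
  exacts [(hU _).const_mul _, analyticCoeffs_zero]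

theorem analyticCoeffs_tmul {U V : ℕ → (Fin N → ℕ) → ℂ} (hU : ∀ k, AnalyticCoeffs ρ (U k))
    (hV : ∀ k, AnalyticCoeffs ρ (V k)) (j : ℕ) : AnalyticCoeffs ρ (tmul N m₀ U V j) :=
  analyticCoeffs_sum fun k _ => (analyticCoeffs_coeffMul (hU k) (hV (j - k))).const_mul _

theorem analyticCoeffs_sProd : ∀ {n : ℕ} {F : Fin n → ℕ → (Fin N → ℕ) → ℂ},
    (∀ ℓ k, AnalyticCoeffs ρ (F ℓ k)) → ∀ j, AnalyticCoeffs ρ (sProd N m₀ n F j)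
  | 0, _, _ => analyticCoeffs_sOne
  | _ + 1, _, hF => analyticCoeffs_tmul (hF 0) (analyticCoeffs_sProd fun ℓ => hF ℓ.succ)

theorem analyticCoeffs_Papp {κ : ℕ} {s : Fin N → ℝ} {m : Fin N → ℕ → ℝ}
    (hm : ∀ d, IsRegularMomentSeq (m d) (s d)) {ι : Type} [Fintype ι]
    {M : ι → MomentMonomial N κ} {A : ι → ℕ → (Fin N → ℕ) → ℂ}
    (hA : ∀ τ k, AnalyticCoeffs ρ (A τ k)) {U : ℕ → (Fin N → ℕ) → ℂ}
    (hU : ∀ k, AnalyticCoeffs ρ (U k)) (j : ℕ) :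
    AnalyticCoeffs ρ (Papp N κ m₀ m ι M A U j) :=
  analyticCoeffs_sum fun τ _ => analyticCoeffs_tpowMul (analyticCoeffs_tmul (hA τ)
    (analyticCoeffs_sProd fun ℓ => analyticCoeffs_sProd fun _ k =>
      analyticCoeffs_momentDerivQ hm _ (hU (k + (M τ).i ℓ)))) j

/-- `hA` is the absolute convergence of `a(t,x) = Σ_j a_j(x) t^j/m₀(j)` at time radius `|r₀|`
and every space polyradius `r < ρ`. -/
theorem analyticCoeffs_of_summable_prod {A : ℕ → (Fin N → ℕ) → ℂ} {r₀ : ℝ} (hr₀ : r₀ ≠ 0)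
    (hA : ∀ r : Fin N → ℝ, (∀ d, 0 ≤ r d) → (∀ d, r d < ρ d) →
      Summable fun p : ℕ × (Fin N → ℕ) => ‖A p.1 p.2‖ / m₀ p.1 * r₀ ^ p.1 * ∏ d, r d ^ p.2 d)
    {j : ℕ} (hj : m₀ j ≠ 0) : AnalyticCoeffs ρ (A j) := fun r h0 h1 =>
  (((hA r h0 h1).comp_injective (Prod.mk_right_injective j)).mul_left
    (m₀ j / r₀ ^ j)).congr fun J => by
      simp only [Function.comp_apply]
      field_simp

end FormalSeries

theorem formally_well_posed_general (N κ : ℕ)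
    (ρ₀ : ℝ) (hρ₀ : 0 < ρ₀) (ρ : Fin N → ℝ)
    (s₀ : ℝ) (m₀ : ℕ → ℝ) (hm₀ : IsRegularMomentSeq m₀ s₀)
    (s : Fin N → ℝ)
    (m : Fin N → ℕ → ℝ) (hm : ∀ d, IsRegularMomentSeq (m d) (s d))
    (ι : Type) [Fintype ι] (M : ι → MomentMonomial N κ)
    (A : ι → ℕ → (Fin N → ℕ) → ℂ)
    (hA : ∀ τ, ∀ (r₀ : ℝ) (r : Fin N → ℝ), 0 ≤ r₀ → r₀ < ρ₀ →
      (∀ d, 0 ≤ r d) → (∀ d, r d < ρ d) →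
      Summable fun p : ℕ × (Fin N → ℕ) =>
        ‖A τ p.1 p.2‖ / m₀ p.1 * r₀ ^ p.1 * ∏ d, r d ^ p.2 d)
    (F : ℕ → (Fin N → ℕ) → ℂ) (hF : ∀ j, AnalyticCoeffs ρ (F j))
    (φ : Fin κ → (Fin N → ℕ) → ℂ) (hφ : ∀ j, AnalyticCoeffs ρ (φ j)) :
    (∃! U : ℕ → (Fin N → ℕ) → ℂ, SolvesEq N κ m₀ m ι M A F φ U) ∧
    (∀ U : ℕ → (Fin N → ℕ) → ℂ, SolvesEq N κ m₀ m ι M A F φ U →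
      ∀ j, AnalyticCoeffs ρ (U j)) := by
  set Φ : (ℕ → (Fin N → ℕ) → ℂ) → ℕ → (Fin N → ℕ) → ℂ :=
    fun U j J => Papp N κ m₀ m ι M A U j J + F j J
  have hΦ : IsCausal κ Φ := fun U V j h => by simp only [Φ, Papp_congr h]
  have hAan : ∀ τ k, AnalyticCoeffs ρ (A τ k) := fun τ k =>
    analyticCoeffs_of_summable_prod (half_pos hρ₀).ne'
      (hA τ (ρ₀ / 2) · (half_pos hρ₀).le (half_lt_self hρ₀)) (hm₀.2.1 k).ne'
  exact ⟨hΦ.existsUnique_isRecSolution, fun U hU =>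
    hΦ.forall_of_isRecSolution analyticCoeffs_zero hφ
      (fun V hV j => (analyticCoeffs_Papp hm hAan hV j).add (hF j)) hU⟩

/-- Formal well-posedness: under the standing assumptions (regular moment sequences, analytic
coefficients `a_τ` with `a_τ(0,x) ≢ 0`, analytic inhomogeneity and initial data, pairwise
distinct pairs `(i_k,q_k)` inside each monomial, and the Assumption
`Σ rℓ iℓ − v_τ < κ`), the Cauchy problem admits a unique formal power series solution
`ũ = Σ_j u_j(x) t^j/m₀(j)`, and all the coefficients `u_j` of this solution are analytic on
the full polydisc `D_{ρ₁,...,ρ_N}`. -/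
theorem formally_well_posed (N κ : ℕ) (hN : 1 ≤ N) (hκ : 1 ≤ κ)
    (ρ₀ : ℝ) (hρ₀ : 0 < ρ₀) (ρ : Fin N → ℝ) (hρ : ∀ d, 0 < ρ d)
    (s₀ : ℝ) (hs₀ : 0 < s₀) (m₀ : ℕ → ℝ) (hm₀ : IsRegularMomentSeq m₀ s₀)
    (s : Fin N → ℝ) (hs : ∀ d, 1 ≤ s d)
    (m : Fin N → ℕ → ℝ) (hm : ∀ d, IsRegularMomentSeq (m d) (s d))
    (ι : Type) [Fintype ι] [Nonempty ι] (M : ι → MomentMonomial N κ)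
    (hdist : ∀ τ, ∀ k k' : Fin (M τ).n, k ≠ k' →
      ((M τ).i k, (M τ).q k) ≠ ((M τ).i k', (M τ).q k'))
    (A : ι → ℕ → (Fin N → ℕ) → ℂ)
    (hA : ∀ τ, ∀ (r₀ : ℝ) (r : Fin N → ℝ), 0 ≤ r₀ → r₀ < ρ₀ →
      (∀ d, 0 ≤ r d) → (∀ d, r d < ρ d) →
      Summable fun p : ℕ × (Fin N → ℕ) =>
        ‖A τ p.1 p.2‖ / m₀ p.1 * r₀ ^ p.1 * ∏ d, r d ^ p.2 d)
    (hA0 : ∀ τ, A τ 0 ≠ 0)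
    (F : ℕ → (Fin N → ℕ) → ℂ) (hF : ∀ j, AnalyticCoeffs ρ (F j))
    (φ : Fin κ → (Fin N → ℕ) → ℂ) (hφ : ∀ j, AnalyticCoeffs ρ (φ j))
    (hass : ∀ τ, (∑ ℓ, (M τ).r ℓ * (M τ).i ℓ) < κ + (M τ).v) :
    (∃! U : ℕ → (Fin N → ℕ) → ℂ, SolvesEq N κ m₀ m ι M A F φ U) ∧
    (∀ U : ℕ → (Fin N → ℕ) → ℂ, SolvesEq N κ m₀ m ι M A F φ U →
      ∀ j, AnalyticCoeffs ρ (U j)) :=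
  formally_well_posed_general N κ ρ₀ hρ₀ ρ s₀ m₀ hm₀ s m hm ι M A hA F hF φ hφ
end

section
/- Let r̃ ≥ 1 be an integer and let α(X) = Σ_{j≥0} α_j X^j and h(X) = Σ_{j≥0} h_j X^j be formal power series with nonnegative real coefficients, each having a positive radius of convergence. Then the functional equation v(X) = X·α(X)·(v(X))^{r̃} + h(X) has a unique formal power series solution v(X) = Σ_{j≥0} v_j X^j, this solution has nonnegative coefficients and a positive radius of convergence, and in particular there exist constants C', K' > 0 such that 0 ≤ v_j ≤ C'·K'^j for all j ≥ 0. -/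
/-!
The map `u ↦ X·α·u^r + h` is an `X`-adic contraction: if `u ≡ w mod X^n` then the images agree
mod `X^(n+1)`, since `u - w` divides `u^r - w^r`. So the `n`-th coefficient of a fixed point is
that of the `(n+1)`-st iterate of `0`, which gives existence, uniqueness and nonnegativity.

For the growth bound, the weighted partial sums `Sₙ(f) = ∑_{j<n} f_j t^j` are submultiplicative
on series with nonnegative coefficients, so `Sₙ₊₁(v) ≤ t·Sₙ(α)·Sₙ(v)^r + Sₙ₊₁(h)`. Geometric
bounds on `α` and `h` keep `Sₙ(α)` and `Sₙ(h)` bounded for small `t > 0`, and then this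
recursion keeps `Sₙ(v)` bounded; finally `v_j t^j ≤ S_{j+1}(v)`.
-/

open PowerSeries Finset Function Set

namespace PowerSeries

section XAdic

variable {R : Type*} [CommRing R]

theorem X_pow_dvd_sub_iff {n : ℕ} {f g : R⟦X⟧} :
    X ^ n ∣ f - g ↔ ∀ m < n, coeff m f = coeff m g := by
  simp only [X_pow_dvd_iff, map_sub, sub_eq_zero]

def IsXAdicContraction (F : R⟦X⟧ → R⟦X⟧) : Prop :=
  ∀ n v w, X ^ n ∣ v - w → X ^ (n + 1) ∣ F v - F w

namespace IsXAdicContraction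

variable {F : R⟦X⟧ → R⟦X⟧}

theorem X_pow_dvd_iterate_sub (hF : IsXAdicContraction F) (k : ℕ) (v w : R⟦X⟧) :
    X ^ k ∣ F^[k] v - F^[k] w := by
  induction k with
  | zero => simp
  | succ k ih => simpa only [iterate_succ_apply'] using hF k _ _ ih

theorem coeff_eq_coeff_iterate (hF : IsXAdicContraction F) {v : R⟦X⟧} (hv : IsFixedPt F v)
    (n : ℕ) (u : R⟦X⟧) : coeff n v = coeff n (F^[n + 1] u) := by
  have hdvd := hF.X_pow_dvd_iterate_sub (n + 1) v u
  rw [(hv.iterate (n + 1)).eq] at hdvd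
  exact X_pow_dvd_sub_iff.mp hdvd n n.lt_succ_self

theorem isFixedPt_mk_coeff_iterate (hF : IsXAdicContraction F) :
    IsFixedPt F (mk fun n => coeff n (F^[n + 1] 0)) := by
  set v : R⟦X⟧ := mk fun n => coeff n (F^[n + 1] 0)
  have hv : ∀ n, X ^ n ∣ v - F^[n] 0 := by
    refine fun n => X_pow_dvd_sub_iff.mpr fun m hm => ?_
    obtain ⟨k, rfl⟩ := Nat.exists_eq_add_of_lt hm
    have hdvd := hF.X_pow_dvd_iterate_sub (m + 1) 0 (F^[k] 0)
    rw [coeff_mk, X_pow_dvd_sub_iff.mp hdvd m m.lt_succ_self, ← iterate_add_apply, add_right_comm]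
  ext n
  rw [X_pow_dvd_sub_iff.mp (hF n _ _ (hv n)) n n.lt_succ_self, ← iterate_succ_apply' F n,
    coeff_mk]

theorem existsUnique_isFixedPt (hF : IsXAdicContraction F) : ∃! v, IsFixedPt F v :=
  ⟨_, hF.isFixedPt_mk_coeff_iterate, fun w hw => ext fun n => by
    rw [hF.coeff_eq_coeff_iterate hw n 0, coeff_mk]⟩

end IsXAdicContraction

theorem isXAdicContraction_X_mul_mul_pow_add (a h : R⟦X⟧) (r : ℕ) :
    IsXAdicContraction fun u => X * a * u ^ r + h := by
  intro n v w hvw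
  rw [show X * a * v ^ r + h - (X * a * w ^ r + h) = X * a * (v ^ r - w ^ r) by ring, pow_succ']
  exact mul_dvd_mul (dvd_mul_right X a) (hvw.trans (sub_dvd_pow_sub_pow v w r))

end XAdic

section Nonneg

variable (R : Type*) [CommSemiring R] [PartialOrder R] [IsOrderedRing R]

def nonnegCoeffs : Subsemiring R⟦X⟧ where
  carrier := {f | ∀ n, 0 ≤ coeff n f}
  mul_mem' hf hg n := by
    rw [coeff_mul]
    exact sum_nonneg fun p _ => mul_nonneg (hf p.1) (hg p.2)
  one_mem' n := by
    rw [coeff_one]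
    split_ifs <;> simp
  add_mem' hf hg n := by
    rw [map_add]
    exact add_nonneg (hf n) (hg n)
  zero_mem' n := by simp

variable {R}

theorem X_mem_nonnegCoeffs : (X : R⟦X⟧) ∈ nonnegCoeffs R := fun n => by
  rw [coeff_X]
  split_ifs <;> simp

theorem coe_trunc_mem_nonnegCoeffs {f : R⟦X⟧} (hf : f ∈ nonnegCoeffs R) (n : ℕ) :
    (trunc n f : R⟦X⟧) ∈ nonnegCoeffs R := fun m => by
  rw [Polynomial.coeff_coe, coeff_trunc]
  split_ifs
  exacts [hf m, le_rfl]

end Nonneg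

theorem IsXAdicContraction.mem_nonnegCoeffs_of_isFixedPt {R : Type*} [CommRing R]
    [PartialOrder R] [IsOrderedRing R] {F : R⟦X⟧ → R⟦X⟧} (hF : IsXAdicContraction F)
    (hmaps : MapsTo F (nonnegCoeffs R) (nonnegCoeffs R)) {v : R⟦X⟧} (hv : IsFixedPt F v) :
    v ∈ nonnegCoeffs R := fun n => by
  rw [hF.coeff_eq_coeff_iterate hv n 0]
  exact hmaps.iterate (n + 1) (zero_mem _) n

section Truncation

variable {R : Type*} [CommSemiring R]

theorem eval_trunc_eq_sum_range (n : ℕ) (f : R⟦X⟧) (t : R) :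
    (trunc n f).eval t = ∑ i ∈ range n, coeff i f * t ^ i :=
  eval₂_trunc_eq_sum_range t (RingHom.id R) n f

theorem eval_trunc_succ_X_mul (n : ℕ) (f : R⟦X⟧) (t : R) :
    (trunc (n + 1) (X * f)).eval t = t * (trunc n f).eval t := by
  simp only [eval_trunc_eq_sum_range, sum_range_succ', coeff_succ_X_mul, coeff_zero_X_mul,
    zero_mul, add_zero, mul_sum, pow_succ]
  exact sum_congr rfl fun i _ => by ring

end Truncation

section WeightedPartialSums

variable {R : Type*} [CommSemiring R] [PartialOrder R] [IsOrderedRing R] {f g : R⟦X⟧} {t : R}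

theorem eval_trunc_nonneg (hf : f ∈ nonnegCoeffs R) (ht : 0 ≤ t) (n : ℕ) :
    0 ≤ (trunc n f).eval t := by
  rw [eval_trunc_eq_sum_range]
  exact sum_nonneg fun i _ => mul_nonneg (hf i) (pow_nonneg ht i)

theorem eval_trunc_mono (hf : f ∈ nonnegCoeffs R) (ht : 0 ≤ t) {m n : ℕ} (hmn : m ≤ n) :
    (trunc m f).eval t ≤ (trunc n f).eval t := by
  simp only [eval_trunc_eq_sum_range]
  exact sum_le_sum_of_subset_of_nonneg (range_subset_range.mpr hmn) fun i _ _ =>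
    mul_nonneg (hf i) (pow_nonneg ht i)

theorem coeff_mul_pow_le_eval_trunc (hf : f ∈ nonnegCoeffs R) (ht : 0 ≤ t) (n : ℕ) :
    coeff n f * t ^ n ≤ (trunc (n + 1) f).eval t := by
  rw [eval_trunc_eq_sum_range, sum_range_succ, ← eval_trunc_eq_sum_range]
  exact le_add_of_nonneg_left (eval_trunc_nonneg hf ht n)

theorem eval_trunc_coe_le {p : Polynomial R} (hp : (p : R⟦X⟧) ∈ nonnegCoeffs R) (ht : 0 ≤ t)
    (n : ℕ) :
    (trunc n (p : R⟦X⟧)).eval t ≤ p.eval t := by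
  have hdeg : p.natDegree < max n (p.natDegree + 1) := lt_max_of_lt_right p.natDegree.lt_succ_self
  calc (trunc n (p : R⟦X⟧)).eval t ≤ (trunc (max n (p.natDegree + 1)) (p : R⟦X⟧)).eval t :=
        eval_trunc_mono hp ht (le_max_left _ _)
    _ = p.eval t := by rw [trunc_coe_eq_self hdeg]

theorem eval_trunc_mul_le (hf : f ∈ nonnegCoeffs R) (hg : g ∈ nonnegCoeffs R) (ht : 0 ≤ t)
    (n : ℕ) : (trunc n (f * g)).eval t ≤ (trunc n f).eval t * (trunc n g).eval t := by
  have hprod : ((trunc n f * trunc n g : Polynomial R) : R⟦X⟧) ∈ nonnegCoeffs R := by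
    rw [Polynomial.coe_mul]
    exact mul_mem (coe_trunc_mem_nonnegCoeffs hf n) (coe_trunc_mem_nonnegCoeffs hg n)
  rw [← trunc_trunc_mul_trunc, ← Polynomial.coe_mul, ← Polynomial.eval_mul]
  exact eval_trunc_coe_le hprod ht n

theorem eval_trunc_pow_le (hf : f ∈ nonnegCoeffs R) (ht : 0 ≤ t) (n r : ℕ) :
    (trunc n (f ^ r)).eval t ≤ (trunc n f).eval t ^ r := by
  induction r with
  | zero =>
    rw [pow_zero, pow_zero, ← Polynomial.coe_one]
    exact (eval_trunc_coe_le (Polynomial.coe_one (R := R) ▸ one_mem _) ht n).trans_eq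
      Polynomial.eval_one
  | succ r ih =>
    rw [pow_succ, pow_succ]
    exact (eval_trunc_mul_le (pow_mem hf r) hf ht n).trans
      (mul_le_mul_of_nonneg_right ih (eval_trunc_nonneg hf ht n))

theorem eval_trunc_le_of_eq_X_mul_mul_pow_add {a h v : R⟦X⟧} {r : ℕ} {A H M : R}
    (ha : a ∈ nonnegCoeffs R) (hv : v ∈ nonnegCoeffs R) (ht : 0 ≤ t)
    (hA : ∀ n, (trunc n a).eval t ≤ A) (hH : ∀ n, (trunc n h).eval t ≤ H) (hM0 : 0 ≤ M)
    (hM : t * A * M ^ r + H ≤ M) (heq : v = X * a * v ^ r + h) (n : ℕ) :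
    (trunc n v).eval t ≤ M := by
  induction n with
  | zero => simpa using hM0
  | succ n ih =>
    have hA0 : 0 ≤ A := (eval_trunc_nonneg ha ht 0).trans (hA 0)
    have hterm : (trunc n (a * v ^ r)).eval t ≤ A * M ^ r :=
      (eval_trunc_mul_le ha (pow_mem hv r) ht n).trans <| mul_le_mul (hA n)
        ((eval_trunc_pow_le hv ht n r).trans (pow_le_pow_left₀ (eval_trunc_nonneg hv ht n) ih r))
        (eval_trunc_nonneg (pow_mem hv r) ht n) hA0
    calc (trunc (n + 1) v).eval t
        = t * (trunc n (a * v ^ r)).eval t + (trunc (n + 1) h).eval t := by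
          nth_rewrite 1 [heq]
          rw [map_add, Polynomial.eval_add, mul_assoc, eval_trunc_succ_X_mul]
      _ ≤ t * (A * M ^ r) + H := add_le_add (mul_le_mul_of_nonneg_left hterm ht) (hH _)
      _ ≤ M := by rwa [← mul_assoc]

end WeightedPartialSums

section GeometricBounds

theorem exists_common_geometric_bound {u w : ℕ → ℝ}
    (hu : ∃ C K : ℝ, 0 < C ∧ 0 < K ∧ ∀ j, u j ≤ C * K ^ j)
    (hw : ∃ C K : ℝ, 0 < C ∧ 0 < K ∧ ∀ j, w j ≤ C * K ^ j) :
    ∃ C K : ℝ, 0 < C ∧ 0 < K ∧ (∀ j, u j ≤ C * K ^ j) ∧ ∀ j, w j ≤ C * K ^ j := by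
  obtain ⟨C₁, K₁, hC₁, hK₁, hu⟩ := hu
  obtain ⟨C₂, K₂, hC₂, hK₂, hw⟩ := hw
  refine ⟨max C₁ C₂, max K₁ K₂, lt_max_of_lt_left hC₁, lt_max_of_lt_left hK₁,
    fun j => (hu j).trans ?_, fun j => (hw j).trans ?_⟩ <;> gcongr <;> simp

theorem eval_trunc_le_of_coeff_le {f : ℝ⟦X⟧} {C K t : ℝ} (hC : 0 ≤ C) (hK : 0 ≤ K) (ht : 0 ≤ t)
    (hKt : K * t ≤ 1 / 2) (hf : ∀ j, coeff j f ≤ C * K ^ j) (n : ℕ) :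
    (trunc n f).eval t ≤ 2 * C := by
  rw [eval_trunc_eq_sum_range]
  calc ∑ j ∈ range n, coeff j f * t ^ j ≤ ∑ j ∈ range n, C * (1 / 2) ^ j :=
        sum_le_sum fun j _ => calc
          coeff j f * t ^ j ≤ C * K ^ j * t ^ j := mul_le_mul_of_nonneg_right (hf j) (by positivity)
          _ = C * (K * t) ^ j := by ring
          _ ≤ C * (1 / 2) ^ j :=
            mul_le_mul_of_nonneg_left (pow_le_pow_left₀ (by positivity) hKt j) hC
    _ = C * ∑ j ∈ range n, (1 / 2 : ℝ) ^ j := by rw [mul_sum]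
    _ ≤ C * 2 := mul_le_mul_of_nonneg_left (sum_geometric_two_le n) hC
    _ = 2 * C := mul_comm _ _

theorem coeff_le_of_eval_trunc_le {f : ℝ⟦X⟧} {M t : ℝ} (hf : f ∈ nonnegCoeffs ℝ) (ht : 0 < t)
    (hM : ∀ n, (trunc n f).eval t ≤ M) (j : ℕ) : coeff j f ≤ M * t⁻¹ ^ j := by
  rw [inv_pow, ← div_eq_mul_inv, le_div_iff₀ (pow_pos ht j)]
  exact (coeff_mul_pow_le_eval_trunc hf ht.le j).trans (hM _)

/-- Taking `t = (2K + (4C)^r)⁻¹` and weighted partial sums at `t`, both `a` and `h` contribute at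
most `2C`, and `4C` is then stable under `M ↦ t · 2C · M^r + 2C`. -/
theorem exists_coeff_le_geometric_of_eq_X_mul_mul_pow_add {a h v : ℝ⟦X⟧} {r : ℕ} {C K : ℝ}
    (ha : a ∈ nonnegCoeffs ℝ) (hv : v ∈ nonnegCoeffs ℝ) (hC : 0 < C) (hK : 0 < K)
    (haK : ∀ j, coeff j a ≤ C * K ^ j) (hhK : ∀ j, coeff j h ≤ C * K ^ j)
    (heq : v = X * a * v ^ r + h) :
    ∃ C' K' : ℝ, 0 < C' ∧ 0 < K' ∧ ∀ j, coeff j v ≤ C' * K' ^ j := by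
  set t : ℝ := (2 * K + (4 * C) ^ r)⁻¹
  have ht : 0 < t := by positivity
  have hle : ∀ x, x ≤ 2 * K + (4 * C) ^ r → t * x ≤ 1 := fun x hx =>
    (mul_le_mul_of_nonneg_left hx ht.le).trans_eq (inv_mul_cancel₀ (by positivity))
  have hKt : K * t ≤ 1 / 2 := by
    linarith [hle (2 * K) (le_add_of_nonneg_right (by positivity))]
  have htC : t * (4 * C) ^ r ≤ 1 := hle _ (le_add_of_nonneg_left (by positivity))
  have hM : t * (2 * C) * (4 * C) ^ r + 2 * C ≤ 4 * C := by
    linarith [mul_le_mul_of_nonneg_left htC (by positivity : (0 : ℝ) ≤ 2 * C)]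
  refine ⟨4 * C, t⁻¹, by positivity, by positivity, coeff_le_of_eval_trunc_le hv ht fun n => ?_⟩
  exact eval_trunc_le_of_eq_X_mul_mul_pow_add ha hv ht.le
    (eval_trunc_le_of_coeff_le hC.le hK.le ht.le hKt haK)
    (eval_trunc_le_of_coeff_le hC.le hK.le ht.le hKt hhK) (by positivity) hM heq n

end GeometricBounds

end PowerSeries

theorem functional_equation_unique_convergent_solution_general
    (rTilde : ℕ) (α h : PowerSeries ℝ)
    (hα0 : ∀ j, 0 ≤ PowerSeries.coeff (R := ℝ) j α)
    (hh0 : ∀ j, 0 ≤ PowerSeries.coeff (R := ℝ) j h)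
    (hαr : ∃ C K : ℝ, 0 < C ∧ 0 < K ∧ ∀ j, |PowerSeries.coeff (R := ℝ) j α| ≤ C * K ^ j)
    (hhr : ∃ C K : ℝ, 0 < C ∧ 0 < K ∧ ∀ j, |PowerSeries.coeff (R := ℝ) j h| ≤ C * K ^ j) :
    (∃! v : PowerSeries ℝ, v = PowerSeries.X * α * v ^ rTilde + h) ∧
    ∀ v : PowerSeries ℝ, v = PowerSeries.X * α * v ^ rTilde + h →
      (∀ j, 0 ≤ PowerSeries.coeff (R := ℝ) j v) ∧
      ∃ C' K' : ℝ, 0 < C' ∧ 0 < K' ∧ ∀ j, PowerSeries.coeff (R := ℝ) j v ≤ C' * K' ^ j := by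
  obtain ⟨C, K, hC, hK, hαK, hhK⟩ := exists_common_geometric_bound hαr hhr
  have hF := isXAdicContraction_X_mul_mul_pow_add α h rTilde
  have hmaps : MapsTo (fun u => X * α * u ^ rTilde + h) (nonnegCoeffs ℝ) (nonnegCoeffs ℝ) :=
    fun u hu => add_mem (mul_mem (mul_mem X_mem_nonnegCoeffs hα0) (pow_mem hu rTilde)) hh0
  refine ⟨(existsUnique_congr fun _ => eq_comm).mpr hF.existsUnique_isFixedPt, fun v hv => ?_⟩
  have hv0 := hF.mem_nonnegCoeffs_of_isFixedPt hmaps hv.symm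
  exact ⟨hv0, exists_coeff_le_geometric_of_eq_X_mul_mul_pow_add hα0 hv0 hC hK
    (fun j => (le_abs_self _).trans (hαK j)) (fun j => (le_abs_self _).trans (hhK j)) hv⟩

/-- Let `rTilde ≥ 1` and let `α(X), h(X)` be formal power series over `ℝ` with nonnegative
coefficients and positive radii of convergence (i.e. geometrically bounded coefficients).
Then the functional equation `v = X·α·v^rTilde + h` has a unique formal power series solution,
and this solution has nonnegative coefficients and a positive radius of convergence: there
are `C', K' > 0` with `0 ≤ v_j ≤ C'·K'^j` for all `j`. -/
theorem functional_equation_unique_convergent_solution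
    (rTilde : ℕ) (hrTilde : 1 ≤ rTilde) (α h : PowerSeries ℝ)
    (hα0 : ∀ j, 0 ≤ PowerSeries.coeff (R := ℝ) j α)
    (hh0 : ∀ j, 0 ≤ PowerSeries.coeff (R := ℝ) j h)
    (hαr : ∃ C K : ℝ, 0 < C ∧ 0 < K ∧ ∀ j, |PowerSeries.coeff (R := ℝ) j α| ≤ C * K ^ j)
    (hhr : ∃ C K : ℝ, 0 < C ∧ 0 < K ∧ ∀ j, |PowerSeries.coeff (R := ℝ) j h| ≤ C * K ^ j) :
    (∃! v : PowerSeries ℝ, v = PowerSeries.X * α * v ^ rTilde + h) ∧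
    ∀ v : PowerSeries ℝ, v = PowerSeries.X * α * v ^ rTilde + h →
      (∀ j, 0 ≤ PowerSeries.coeff (R := ℝ) j v) ∧
      ∃ C' K' : ℝ, 0 < C' ∧ 0 < K' ∧ ∀ j, PowerSeries.coeff (R := ℝ) j v ≤ C' * K' ^ j :=
  functional_equation_unique_convergent_solution_general rTilde α h hα0 hh0 hαr hhr
end
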